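/- arXiv:1705.06359 — 7 statements merged into one kernel-verified Lean document; each statement's English description precedes it below -/
import Mathlib

section
/- Let n = (a,b) and n' = (c,d) be primitive vectors of ℤ² that are linearly independent over ℝ. Choose κ, λ ∈ ℤ with κ·a − λ·b = 1, set q := |a·d − b·c|, and let p be the unique integer with 0 ≤ p < q and κ·c − λ·d ≡ p (mod q). Then there exists a matrix Ξ ∈ GL₂(ℤ) such that the image of the cone ℝ≥0·n + ℝ≥0·n' under the linear map x ↦ Ξ·x equals the cone ℝ≥0·(1,0) + ℝ≥0·(p,q). -/
/-- The cone ℝ≥0·u + ℝ≥0·v in ℝ². -/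
def cone2 (u v : ℝ × ℝ) : Set (ℝ × ℝ) :=
  {x | ∃ s t : ℝ, 0 ≤ s ∧ 0 ≤ t ∧ x = s • u + t • v}

/-- The linear map ℝ² → ℝ² given by an integer 2×2 matrix. -/
def mulMap (Ξ : Matrix (Fin 2) (Fin 2) ℤ) (x : ℝ × ℝ) : ℝ × ℝ :=
  ((Ξ 0 0 : ℝ) * x.1 + (Ξ 0 1 : ℝ) * x.2, (Ξ 1 0 : ℝ) * x.1 + (Ξ 1 1 : ℝ) * x.2)

lemma mulMap_lin (Ξ : Matrix (Fin 2) (Fin 2) ℤ) (s t : ℝ) (u v : ℝ × ℝ) :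
    mulMap Ξ (s • u + t • v) = s • mulMap Ξ u + t • mulMap Ξ v := by
  simp only [mulMap, Prod.smul_mk, Prod.mk_add_mk, Prod.smul_def, Prod.fst_add, Prod.snd_add,
    smul_eq_mul, Prod.smul_fst, Prod.smul_snd, Prod.mk.injEq]
  constructor <;> ring

lemma image_cone2 (Ξ : Matrix (Fin 2) (Fin 2) ℤ) (u v u' v' : ℝ × ℝ)
    (hu : mulMap Ξ u = u') (hv : mulMap Ξ v = v') :
    mulMap Ξ '' cone2 u v = cone2 u' v' := by
  subst hu hv
  ext x
  constructor
  · rintro ⟨y, ⟨s, t, hs, ht, rfl⟩, rfl⟩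
    exact ⟨s, t, hs, ht, mulMap_lin Ξ s t u v⟩
  · rintro ⟨s, t, hs, ht, rfl⟩
    exact ⟨s • u + t • v, ⟨s, t, hs, ht, rfl⟩, (mulMap_lin Ξ s t u v)⟩

/-- with n, n', κ, λ, q, p as in Lemma 2.1, there is Ξ ∈ GL₂(ℤ) mapping the
cone ℝ≥0·n + ℝ≥0·n' onto the cone ℝ≥0·(1,0) + ℝ≥0·(p,q). -/
theorem stmt1 (a b c d k0 l0 p q : ℤ)
    (hn : Int.gcd a b = 1) (hn' : Int.gcd c d = 1)
    (hli : LinearIndependent ℝ ![(((a : ℝ), (b : ℝ)) : ℝ × ℝ), ((c : ℝ), (d : ℝ))])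
    (hkl : k0 * a - l0 * b = 1)
    (hq : q = |a * d - b * c|)
    (hp0 : 0 ≤ p) (hpq : p < q)
    (hmod : Int.ModEq q (k0 * c - l0 * d) p) :
    ∃ Ξ : Matrix (Fin 2) (Fin 2) ℤ, (Ξ.det = 1 ∨ Ξ.det = -1) ∧
      mulMap Ξ '' cone2 ((a : ℝ), (b : ℝ)) ((c : ℝ), (d : ℝ)) =
        cone2 (1, 0) ((p : ℝ), (q : ℝ)) := by
  set e : ℤ := a * d - b * c with he
  -- e ≠ 0 from linear independence
  have hrw := (LinearIndependent.pair_iff).mp hli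
  have he0 : e ≠ 0 := by
    intro h0
    -- d•(a,b) - b•(c,d) = 0
    have h1 := hrw (d : ℝ) (-(b : ℝ)) (by
      have : (d : ℝ) * a - b * c = 0 := by
        have : ((a * d - b * c : ℤ) : ℝ) = 0 := by rw [← he] at *; exact_mod_cast congrArg (Int.cast : ℤ → ℝ) h0
        push_cast at this; linarith
      simp [Prod.ext_iff]
      constructor <;> ring_nf <;> linarith)
    have hd : (d : ℝ) = 0 := h1.1
    have hb : (b : ℝ) = 0 := by have := h1.2; linarith
    have h2 := hrw (c : ℝ) (-(a : ℝ)) (by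
      simp [Prod.ext_iff, hb, hd]
      ring)
    have ha : (a : ℝ) = 0 := by have := h2.2; linarith
    have : a = 0 := by exact_mod_cast ha
    have : b = 0 := by exact_mod_cast hb
    simp_all [Int.gcd]
  set σ : ℤ := e.sign with hσ
  have hσe : σ * e = |e| := by
    rcases lt_trichotomy e 0 with h | h | h
    · simp [hσ, Int.sign_eq_neg_one_of_neg h, abs_of_neg h]
    · exact absurd h he0
    · simp [hσ, Int.sign_eq_one_of_pos h, abs_of_pos h]
  have hqe : q = σ * e := by rw [hσe, hq]
  have hq0 : q ≠ 0 := by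
    rw [hq]; simpa using he0
  obtain ⟨m, hm⟩ : q ∣ p - (k0 * c - l0 * d) := Int.ModEq.dvd hmod
  refine ⟨!![k0 - m * σ * b, -l0 + m * σ * a; -σ * b, σ * a], ?_, ?_⟩
  · have hdet : (!![k0 - m * σ * b, -l0 + m * σ * a; -σ * b, σ * a]).det = σ := by
      simp [Matrix.det_fin_two_of]
      linear_combination σ * hkl
    rw [hdet]
    rcases lt_trichotomy e 0 with h | h | h
    · right; simp [hσ, Int.sign_eq_neg_one_of_neg h]
    · exact absurd h he0
    · left; simp [hσ, Int.sign_eq_one_of_pos h]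
  · have hq' : q = σ * (a * d - b * c) := by rw [hqe, he]
    have h1 : (k0 - m * σ * b) * a + (-l0 + m * σ * a) * b = 1 := by linear_combination hkl
    have h2 : (-σ * b) * a + (σ * a) * b = 0 := by ring
    have h3 : (k0 - m * σ * b) * c + (-l0 + m * σ * a) * d = p := by
      have hp' : p = k0 * c - l0 * d + q * m := by linarith
      rw [hp', hq']; ring
    have h4 : (-σ * b) * c + (σ * a) * d = q := by rw [hq']; ring
    apply image_cone2
    · have r1 := congrArg (Int.cast : ℤ → ℝ) h1
      have r2 := congrArg (Int.cast : ℤ → ℝ) h2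
      push_cast at r1 r2
      simp only [mulMap, Matrix.of_apply, Matrix.cons_val', Matrix.cons_val_zero,
        Matrix.empty_val', Matrix.cons_val_fin_one, Matrix.cons_val_one, Matrix.head_cons,
        Matrix.head_fin_const]
      rw [Prod.ext_iff]
      constructor <;> push_cast <;> [linarith [r1]; linarith [r2]]
    · have r3 := congrArg (Int.cast : ℤ → ℝ) h3
      have r4 := congrArg (Int.cast : ℤ → ℝ) h4
      push_cast at r3 r4
      simp only [mulMap, Matrix.of_apply, Matrix.cons_val', Matrix.cons_val_zero,
        Matrix.empty_val', Matrix.cons_val_fin_one, Matrix.cons_val_one, Matrix.head_cons,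
        Matrix.head_fin_const]
      rw [Prod.ext_iff]
      constructor <;> push_cast <;> [linarith [r3]; linarith [r4]]
end

section
/- Let n and n' be primitive vectors of ℤ² that are linearly independent over ℝ. Then the following are equivalent: (i) {n, n'} is a ℤ-basis of ℤ²; (ii) |det(n, n')| = 1; (iii) the only lattice points of ℤ² contained in the convex hull conv({0, n, n'}) are 0, n, and n', i.e. conv({0, n, n'}) ∩ ℤ² = {0, n, n'}. -/
/-!
Over any commutative ring, `(s, t) ↦ s • (a, b) + t • (c, d)` is bijective exactly when
`a * d - b * c` is a unit; over `ℤ` this is (i) ⇔ (ii), and it says that every point of `ℤ²` has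
integer coordinates with respect to `n, n'`.

For (iii), write a lattice point as `s • n + t • n'` with real `s, t`. Subtracting
`⌊s⌋ • n + ⌊t⌋ • n'` gives a lattice point `p` with coordinates `(fract s, fract t)`; either it or
its reflection `n + n' - p` lies in the triangle `conv {0, n, n'}`. So if the only lattice points
of the triangle are its vertices, the fractional parts vanish. Conversely, if all coordinates of
lattice points are integers, the only ones allowed in the triangle are `(0,0), (1,0), (0,1)`.
-/

/-- The lattice ℤ² viewed inside ℝ². -/
def latticePts : Set (ℝ × ℝ) := {x | ∃ m n : ℤ, x = ((m : ℝ), (n : ℝ))}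

section Determinant

variable {R : Type*} [CommRing R] {a b c d : R}

theorem isUnit_det_of_forall_exists_coords
    (h : ∀ x y : R, ∃ st : R × R, x = st.1 * a + st.2 * c ∧ y = st.1 * b + st.2 * d) :
    IsUnit (a * d - b * c) := by
  obtain ⟨⟨s, t⟩, h₁, h₂⟩ := h 1 0
  obtain ⟨⟨u, v⟩, h₃, h₄⟩ := h 0 1
  refine .of_mul_eq_one (s * v - t * u) ?_
  linear_combination (-(u * b + v * d)) * h₁ + (u * a + v * c) * h₂ - h₄

theorem existsUnique_coords_of_isUnit_det (h : IsUnit (a * d - b * c)) (x y : R) :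
    ∃! st : R × R, x = st.1 * a + st.2 * c ∧ y = st.1 * b + st.2 * d := by
  obtain ⟨e, he⟩ := h.exists_right_inv
  refine ⟨((x * d - y * c) * e, (a * y - b * x) * e), ⟨?_, ?_⟩, ?_⟩
  · linear_combination (-x) * he
  · linear_combination (-y) * he
  · rintro ⟨s, t⟩ ⟨rfl, rfl⟩
    ext
    · linear_combination (-s) * he
    · linear_combination (-t) * he

end Determinant

section Triangle

variable {E : Type*} [AddCommGroup E] [Module ℝ E] {u v x : E}

theorem mem_convexHull_zero_pair_iff :
    x ∈ convexHull ℝ {0, u, v} ↔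
      ∃ s t : ℝ, 0 ≤ s ∧ 0 ≤ t ∧ s + t ≤ 1 ∧ x = s • u + t • v := by
  refine ⟨fun hx => ?_, ?_⟩
  · refine convexHull_min (t := {x : E | ∃ s t : ℝ, 0 ≤ s ∧ 0 ≤ t ∧ s + t ≤ 1 ∧
      x = s • u + t • v}) ?_ ?_ hx
    · rintro p (rfl | rfl | rfl)
      · exact ⟨0, 0, by simp⟩
      · exact ⟨1, 0, by simp⟩
      · exact ⟨0, 1, by simp⟩
    · rintro _ ⟨s₁, t₁, hs₁, ht₁, hst₁, rfl⟩ _ ⟨s₂, t₂, hs₂, ht₂, hst₂, rfl⟩ p q hp hq hpq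
      refine ⟨p * s₁ + q * s₂, p * t₁ + q * t₂, by positivity, by positivity, ?_, by module⟩
      nlinarith
  · rintro ⟨s, t, hs, ht, hst, rfl⟩
    have key := (convex_convexHull ℝ ({0, u, v} : Set E)).sum_mem
      (t := Finset.univ) (w := ![1 - s - t, s, t]) (z := ![0, u, v])
      (by intro i _; fin_cases i <;> simp <;> linarith)
      (by simp [Fin.sum_univ_three]; ring)
      (by intro i _; fin_cases i <;> exact subset_convexHull ℝ _ (by simp))
    simpa [Fin.sum_univ_three] using key

theorem coords_eq_of_smul_add_smul_mem_vertices (huv : LinearIndependent ℝ ![u, v]) {s t : ℝ}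
    (h : s • u + t • v ∈ ({0, u, v} : Set E)) :
    (s = 0 ∧ t = 0) ∨ (s = 1 ∧ t = 0) ∨ (s = 0 ∧ t = 1) := by
  rcases h with h | h | h
  · exact Or.inl (huv.eq_of_pair (s' := 0) (t' := 0) (by simpa using h))
  · exact Or.inr (Or.inl (huv.eq_of_pair (s' := 1) (t' := 0) (by simpa using h)))
  · exact Or.inr (Or.inr (huv.eq_of_pair (s' := 0) (t' := 1) (by simpa using h)))

theorem exists_int_coords_of_convexHull_zero_pair_inter_eq (huv : LinearIndependent ℝ ![u, v])
    {L : AddSubgroup E} (hu : u ∈ L) (hv : v ∈ L) (hL : (L : Set E) ⊆ Submodule.span ℝ {u, v})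
    (h : convexHull ℝ {0, u, v} ∩ L = {0, u, v}) (hx : x ∈ L) :
    ∃ i j : ℤ, x = (i : ℝ) • u + (j : ℝ) • v := by
  have vertex : ∀ s t : ℝ, 0 ≤ s → 0 ≤ t → s + t ≤ 1 → s • u + t • v ∈ L →
      (s = 0 ∧ t = 0) ∨ (s = 1 ∧ t = 0) ∨ (s = 0 ∧ t = 1) := fun s t hs ht hst hmem =>
    coords_eq_of_smul_add_smul_mem_vertices huv
      (h ▸ ⟨mem_convexHull_zero_pair_iff.2 ⟨s, t, hs, ht, hst, rfl⟩, hmem⟩)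
  obtain ⟨s, t, rfl⟩ := Submodule.mem_span_pair.1 (hL hx)
  have hfract : Int.fract s • u + Int.fract t • v ∈ L := by
    have : Int.fract s • u + Int.fract t • v = s • u + t • v - ⌊s⌋ • u - ⌊t⌋ • v := by
      simp only [Int.fract, sub_smul, ← Int.cast_smul_eq_zsmul ℝ]
      abel
    rw [this]
    exact sub_mem (sub_mem hx (zsmul_mem hu _)) (zsmul_mem hv _)
  have hs₀ := Int.fract_nonneg s
  have hs₁ := Int.fract_lt_one s
  have ht₀ := Int.fract_nonneg t
  have ht₁ := Int.fract_lt_one t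
  have hzero : Int.fract s = 0 ∧ Int.fract t = 0 := by
    by_cases hle : Int.fract s + Int.fract t ≤ 1
    · rcases vertex _ _ hs₀ ht₀ hle hfract with ⟨h₁, h₂⟩ | ⟨h₁, h₂⟩ | ⟨h₁, h₂⟩ <;>
        constructor <;> linarith
    · have hmem : (1 - Int.fract s) • u + (1 - Int.fract t) • v ∈ L := by
        convert sub_mem (add_mem hu hv) hfract using 1
        module
      rcases vertex _ _ (by linarith) (by linarith) (by linarith) hmem with
        ⟨h₁, h₂⟩ | ⟨h₁, h₂⟩ | ⟨h₁, h₂⟩ <;> linarith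
  obtain ⟨⟨i, rfl⟩, ⟨j, rfl⟩⟩ := hzero.imp Int.fract_eq_zero_iff.1 Int.fract_eq_zero_iff.1
  exact ⟨i, j, rfl⟩

theorem convexHull_zero_pair_inter_eq_of_forall_exists_int_coords
    (huv : LinearIndependent ℝ ![u, v]) {L : AddSubgroup E} (hu : u ∈ L) (hv : v ∈ L)
    (h : ∀ x ∈ L, ∃ i j : ℤ, x = (i : ℝ) • u + (j : ℝ) • v) :
    convexHull ℝ {0, u, v} ∩ L = {0, u, v} := by
  refine subset_antisymm ?_ (Set.subset_inter (subset_convexHull ℝ _) ?_)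
  · rintro _ ⟨hx, hxL⟩
    obtain ⟨s, t, hs, ht, hst, rfl⟩ := mem_convexHull_zero_pair_iff.1 hx
    obtain ⟨i, j, hij⟩ := h _ hxL
    obtain ⟨rfl, rfl⟩ := huv.eq_of_pair hij
    have hi : 0 ≤ i := by exact_mod_cast hs
    have hj : 0 ≤ j := by exact_mod_cast ht
    have hsum : i + j ≤ 1 := by exact_mod_cast hst
    obtain ⟨rfl, rfl⟩ | ⟨rfl, rfl⟩ | ⟨rfl, rfl⟩ :
        (i = 0 ∧ j = 0) ∨ (i = 1 ∧ j = 0) ∨ (i = 0 ∧ j = 1) := by omega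
    all_goals simp
  · rintro _ (rfl | rfl | rfl)
    exacts [L.zero_mem, hu, hv]

theorem convexHull_zero_pair_inter_eq_iff (huv : LinearIndependent ℝ ![u, v])
    {L : AddSubgroup E} (hu : u ∈ L) (hv : v ∈ L) (hL : (L : Set E) ⊆ Submodule.span ℝ {u, v}) :
    convexHull ℝ {0, u, v} ∩ L = {0, u, v} ↔
      ∀ x ∈ L, ∃ i j : ℤ, x = (i : ℝ) • u + (j : ℝ) • v :=
  ⟨fun h _ hx => exists_int_coords_of_convexHull_zero_pair_inter_eq huv hu hv hL h hx,
    convexHull_zero_pair_inter_eq_of_forall_exists_int_coords huv hu hv⟩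

end Triangle

def intLattice : AddSubgroup (ℝ × ℝ) := ((Int.castAddHom ℝ).prodMap (Int.castAddHom ℝ)).range

theorem mem_intLattice {x : ℝ × ℝ} : x ∈ intLattice ↔ ∃ m n : ℤ, ((m : ℝ), (n : ℝ)) = x := by
  simp only [intLattice, AddMonoidHom.mem_range, Prod.exists]
  rfl

theorem coe_intLattice : (intLattice : Set (ℝ × ℝ)) = latticePts := by
  ext x
  simp only [SetLike.mem_coe, mem_intLattice, latticePts, Set.mem_ofPred_eq, eq_comm]

theorem forall_mem_intLattice_exists_coords_iff (a b c d : ℤ) :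
    (∀ x ∈ intLattice, ∃ i j : ℤ,
        x = (i : ℝ) • ((a : ℝ), (b : ℝ)) + (j : ℝ) • ((c : ℝ), (d : ℝ))) ↔
      ∀ x y : ℤ, ∃ st : ℤ × ℤ, x = st.1 * a + st.2 * c ∧ y = st.1 * b + st.2 * d := by
  simp only [Prod.smul_mk, Prod.mk_add_mk, smul_eq_mul]
  constructor
  · intro h x y
    obtain ⟨i, j, hij⟩ := h _ (mem_intLattice.2 ⟨x, y, rfl⟩)
    obtain ⟨hx, hy⟩ := Prod.mk.inj hij
    exact ⟨(i, j), by exact_mod_cast hx, by exact_mod_cast hy⟩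
  · rintro h _ hx
    obtain ⟨x, y, rfl⟩ := mem_intLattice.1 hx
    obtain ⟨⟨i, j⟩, rfl, rfl⟩ := h x y
    exact ⟨i, j, by push_cast; rfl⟩

theorem stmt2_general (a b c d : ℤ)
    (hli : LinearIndependent ℝ ![(((a : ℝ), (b : ℝ)) : ℝ × ℝ), ((c : ℝ), (d : ℝ))]) :
    ((∀ x y : ℤ, ∃! st : ℤ × ℤ, x = st.1 * a + st.2 * c ∧ y = st.1 * b + st.2 * d)
        ↔ |a * d - b * c| = 1) ∧
    (|a * d - b * c| = 1 ↔
      convexHull ℝ ({(0, 0), ((a : ℝ), (b : ℝ)), ((c : ℝ), (d : ℝ))} : Set (ℝ × ℝ))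
          ∩ latticePts
        = ({(0, 0), ((a : ℝ), (b : ℝ)), ((c : ℝ), (d : ℝ))} : Set (ℝ × ℝ))) := by
  have hspan := hli.span_eq_top_of_card_eq_finrank' (by simp)
  rw [Matrix.range_cons_cons_empty] at hspan
  rw [← Int.isUnit_iff_abs_eq, Prod.mk_zero_zero, ← coe_intLattice,
    convexHull_zero_pair_inter_eq_iff hli (mem_intLattice.2 ⟨a, b, rfl⟩)
      (mem_intLattice.2 ⟨c, d, rfl⟩) (by simp [hspan]),
    forall_mem_intLattice_exists_coords_iff]
  exact ⟨⟨fun h => isUnit_det_of_forall_exists_coords fun x y => (h x y).exists,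
      existsUnique_coords_of_isUnit_det⟩,
    ⟨fun h x y => (existsUnique_coords_of_isUnit_det h x y).exists,
      isUnit_det_of_forall_exists_coords⟩⟩

/-- for primitive, ℝ-linearly independent n = (a,b), n' = (c,d) ∈ ℤ², TFAE:
(i) {n,n'} is a ℤ-basis of ℤ²; (ii) |det(n,n')| = 1;
(iii) conv({0,n,n'}) ∩ ℤ² = {0,n,n'}. -/
theorem stmt2 (a b c d : ℤ)
    (hn : Int.gcd a b = 1) (hn' : Int.gcd c d = 1)
    (hli : LinearIndependent ℝ ![(((a : ℝ), (b : ℝ)) : ℝ × ℝ), ((c : ℝ), (d : ℝ))]) :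
    ((∀ x y : ℤ, ∃! st : ℤ × ℤ, x = st.1 * a + st.2 * c ∧ y = st.1 * b + st.2 * d)
        ↔ |a * d - b * c| = 1) ∧
    (|a * d - b * c| = 1 ↔
      convexHull ℝ ({(0, 0), ((a : ℝ), (b : ℝ)), ((c : ℝ), (d : ℝ))} : Set (ℝ × ℝ))
          ∩ latticePts
        = ({(0, 0), ((a : ℝ), (b : ℝ)), ((c : ℝ), (d : ℝ))} : Set (ℝ × ℝ))) :=
  stmt2_general a b c d hli
end

section
/- Let p, q, p', q' be integers with 0 ≤ p < q, gcd(p,q) = 1, 0 ≤ p' < q', gcd(p',q') = 1, and let σ := ℝ≥0·(1,0) + ℝ≥0·(p,q) and τ := ℝ≥0·(1,0) + ℝ≥0·(p',q'). Then there exists a matrix Ξ ∈ GL₂(ℤ) with Ξ·σ = τ (image of σ under x ↦ Ξ·x equals τ) if and only if q' = q and either p' = p or p·p' ≡ 1 (mod q). -/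
/-!
A unimodular Ξ with Ξσ = τ must map the two rays of σ onto those of τ. Ξ sends primitive integer
vectors to primitive ones, and two primitive vectors on the same ray coincide, so either
Ξ(1,0) = (1,0) and Ξ(p,q) = (p',q'), or Ξ(1,0) = (p',q') and Ξ(p,q) = (1,0). In the first case
Ξ is upper triangular with diagonal (1, ±1), and q, q' > 0 give q' = q and p' ≡ p (mod q); in the second, comparing determinants
gives q' = q and the first row of Ξ gives p p' ≡ 1 (mod q). Conversely the identity and
!![p', k; q, -p] with p p' + k q = 1 realise the two cases.
-/

section Cone

lemma left_mem_cone2 (u v : ℝ × ℝ) : u ∈ cone2 u v :=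
  ⟨1, 0, zero_le_one, le_rfl, by simp⟩

lemma right_mem_cone2 (u v : ℝ × ℝ) : v ∈ cone2 u v :=
  ⟨0, 1, le_rfl, zero_le_one, by simp⟩

lemma cone2_comm (u v : ℝ × ℝ) : cone2 u v = cone2 v u := by
  ext x
  constructor <;> rintro ⟨s, t, hs, ht, rfl⟩ <;> exact ⟨t, s, ht, hs, add_comm _ _⟩

lemma mulMap_add_smul (Ξ : Matrix (Fin 2) (Fin 2) ℤ) (s t : ℝ) (x y : ℝ × ℝ) :
    mulMap Ξ (s • x + t • y) = s • mulMap Ξ x + t • mulMap Ξ y := by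
  simp only [mulMap, Prod.ext_iff, Prod.fst_add, Prod.snd_add, Prod.smul_fst, Prod.smul_snd,
    smul_eq_mul]
  constructor <;> ring

lemma mulMap_image_cone2 (Ξ : Matrix (Fin 2) (Fin 2) ℤ) (u v : ℝ × ℝ) :
    mulMap Ξ '' cone2 u v = cone2 (mulMap Ξ u) (mulMap Ξ v) := by
  ext x
  constructor
  · rintro ⟨y, ⟨s, t, hs, ht, rfl⟩, rfl⟩
    exact ⟨s, t, hs, ht, mulMap_add_smul ..⟩
  · rintro ⟨s, t, hs, ht, rfl⟩
    exact ⟨s • u + t • v, ⟨s, t, hs, ht, rfl⟩, mulMap_add_smul ..⟩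

lemma LinearIndependent.pair_coeff_eq {u v : ℝ × ℝ} (huv : LinearIndependent ℝ ![u, v])
    {s t s' t' : ℝ} (h : s • u + t • v = s' • u + t' • v) : s = s' ∧ t = t' := by
  have hzero := LinearIndependent.pair_iff.1 huv (s - s') (t - t')
    (by linear_combination (norm := module) h)
  constructor <;> linarith [hzero.1, hzero.2]

lemma eq_smul_of_cone2_eq {u v u' v' : ℝ × ℝ} (huv : LinearIndependent ℝ ![u, v])
    (h : cone2 u v = cone2 u' v') :
    ∃ α β : ℝ, 0 < α ∧ 0 < β ∧ (u' = α • u ∧ v' = β • v ∨ u' = α • v ∧ v' = β • u) := by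
  obtain ⟨s, t, hs, ht, hu'⟩ : u' ∈ cone2 u v := h ▸ left_mem_cone2 u' v'
  obtain ⟨s', t', hs', ht', hv'⟩ : v' ∈ cone2 u v := h ▸ right_mem_cone2 u' v'
  obtain ⟨a, b, ha, hb, hu⟩ : u ∈ cone2 u' v' := h ▸ left_mem_cone2 u v
  obtain ⟨c, d, hc, hd, hv⟩ : v ∈ cone2 u' v' := h ▸ right_mem_cone2 u v
  subst hu' hv'
  -- the coefficient matrices of the two bases in each other are nonnegative and mutually inverse
  obtain ⟨e1, e2⟩ := huv.pair_coeff_eq (s := 1) (t := 0)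
    (s' := a * s + b * s') (t' := a * t + b * t') (by linear_combination (norm := module) hu)
  obtain ⟨e3, e4⟩ := huv.pair_coeff_eq (s := 0) (t := 1)
    (s' := c * s + d * s') (t' := c * t + d * t') (by linear_combination (norm := module) hv)
  obtain ⟨hat, hbt'⟩ := (add_eq_zero_iff_of_nonneg (by positivity) (by positivity)).1 e2.symm
  obtain ⟨hcs, hds'⟩ := (add_eq_zero_iff_of_nonneg (by positivity) (by positivity)).1 e3.symm
  rcases eq_or_ne t 0 with rfl | ht0
  · have ht'0 : t' ≠ 0 := by rintro rfl; simp at e4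
    obtain rfl : s' = 0 := (mul_eq_zero.1 hds').resolve_left (by rintro rfl; simp at e4)
    have hs0 : s ≠ 0 := by rintro rfl; simp at e1
    exact ⟨s, t', hs.lt_of_ne' hs0, ht'.lt_of_ne' ht'0, Or.inl ⟨by simp, by simp⟩⟩
  · obtain rfl : a = 0 := (mul_eq_zero.1 hat).resolve_right ht0
    have hs'0 : s' ≠ 0 := by rintro rfl; simp at e1
    obtain rfl : t' = 0 := (mul_eq_zero.1 hbt').resolve_left (by rintro rfl; simp at e1)
    obtain rfl : s = 0 := (mul_eq_zero.1 hcs).resolve_left (by rintro rfl; simp at e4)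
    exact ⟨t, s', ht.lt_of_ne' ht0, hs'.lt_of_ne' hs'0, Or.inr ⟨by simp, by simp⟩⟩

end Cone

section IntegerVectors

def castPair (w : ℤ × ℤ) : ℝ × ℝ := ((w.1 : ℝ), (w.2 : ℝ))

def intMulMap (Ξ : Matrix (Fin 2) (Fin 2) ℤ) (w : ℤ × ℤ) : ℤ × ℤ :=
  (Ξ 0 0 * w.1 + Ξ 0 1 * w.2, Ξ 1 0 * w.1 + Ξ 1 1 * w.2)

lemma mulMap_castPair (Ξ : Matrix (Fin 2) (Fin 2) ℤ) (w : ℤ × ℤ) :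
    mulMap Ξ (castPair w) = castPair (intMulMap Ξ w) := by
  simp [mulMap, castPair, intMulMap]

lemma isCoprime_intMulMap {Ξ : Matrix (Fin 2) (Fin 2) ℤ} (hΞ : IsUnit Ξ.det) {w : ℤ × ℤ}
    (hw : IsCoprime w.1 w.2) : IsCoprime (intMulMap Ξ w).1 (intMulMap Ξ w).2 := by
  obtain ⟨m, n, hmn⟩ := hw
  have hdet : Ξ.det * Ξ.det = 1 := Int.isUnit_mul_self hΞ
  rw [Matrix.det_fin_two] at hdet
  -- apply the adjugate of Ξ to recover w, then the Bézout relation for w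
  refine ⟨Ξ.det * (m * Ξ 1 1 - n * Ξ 1 0), Ξ.det * (n * Ξ 0 0 - m * Ξ 0 1), ?_⟩
  rw [Matrix.det_fin_two]
  simp only [intMulMap]
  linear_combination (Ξ 0 0 * Ξ 1 1 - Ξ 0 1 * Ξ 1 0) ^ 2 * hmn + hdet

lemma eq_of_castPair_eq_smul {w w' : ℤ × ℤ} (hw : IsCoprime w.1 w.2) (hw' : IsCoprime w'.1 w'.2)
    {α : ℝ} (hα : 0 < α) (h : castPair w' = α • castPair w) : w' = w := by
  obtain ⟨m, n, hmn⟩ := hw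
  obtain ⟨m', n', hmn'⟩ := hw'
  simp only [castPair, Prod.ext_iff, Prod.smul_fst, Prod.smul_snd, smul_eq_mul] at h
  have hmnR : (m : ℝ) * w.1 + n * w.2 = 1 := by exact_mod_cast hmn
  have hmnR' : (m' : ℝ) * w'.1 + n' * w'.2 = 1 := by exact_mod_cast hmn'
  -- the Bézout relations show that both α and α⁻¹ are integers
  set k := m * w'.1 + n * w'.2
  set k' := m' * w.1 + n' * w.2
  have hk : (k : ℝ) = α := by
    push_cast [k]; rw [h.1, h.2]; linear_combination α * hmnR
  have hkk' : (k' : ℝ) * k = 1 := by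
    push_cast [k']; rw [hk]; linear_combination hmnR' - m' * h.1 - n' * h.2
  have hk1 : k = 1 :=
    Int.eq_one_of_mul_eq_one_right (b := k') (by exact_mod_cast hk ▸ hα.le)
      (by rw [mul_comm]; exact_mod_cast hkk')
  have hα1 : α = 1 := by rw [← hk, hk1, Int.cast_one]
  rw [hα1, one_mul, one_mul] at h
  exact Prod.ext (by exact_mod_cast h.1) (by exact_mod_cast h.2)

lemma linearIndependent_castPair_one_zero {w : ℤ × ℤ} (hw : w.2 ≠ 0) :
    LinearIndependent ℝ ![castPair (1, 0), castPair w] := by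
  refine LinearIndependent.pair_iff.2 fun s t hst => ?_
  simp only [castPair, Prod.ext_iff, Prod.fst_add, Prod.snd_add, Prod.smul_fst, Prod.smul_snd,
    smul_eq_mul, Prod.fst_zero, Prod.snd_zero] at hst
  have ht : t = 0 := by simpa [hw] using hst.2
  subst ht
  simpa using hst.1

theorem intMulMap_eq_of_image_cone2_eq {Ξ : Matrix (Fin 2) (Fin 2) ℤ} (hΞ : IsUnit Ξ.det)
    {u v u' v' : ℤ × ℤ} (hu : IsCoprime u.1 u.2) (hv : IsCoprime v.1 v.2)
    (hu' : IsCoprime u'.1 u'.2) (hv' : IsCoprime v'.1 v'.2)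
    (hind : LinearIndependent ℝ ![castPair u', castPair v'])
    (h : mulMap Ξ '' cone2 (castPair u) (castPair v) = cone2 (castPair u') (castPair v')) :
    intMulMap Ξ u = u' ∧ intMulMap Ξ v = v' ∨ intMulMap Ξ u = v' ∧ intMulMap Ξ v = u' := by
  rw [mulMap_image_cone2, mulMap_castPair, mulMap_castPair] at h
  obtain ⟨α, β, hα, hβ, ⟨h₁, h₂⟩ | ⟨h₁, h₂⟩⟩ := eq_smul_of_cone2_eq hind h.symm
  · exact .inl ⟨eq_of_castPair_eq_smul hu' (isCoprime_intMulMap hΞ hu) hα h₁,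
      eq_of_castPair_eq_smul hv' (isCoprime_intMulMap hΞ hv) hβ h₂⟩
  · exact .inr ⟨eq_of_castPair_eq_smul hv' (isCoprime_intMulMap hΞ hu) hα h₁,
      eq_of_castPair_eq_smul hu' (isCoprime_intMulMap hΞ hv) hβ h₂⟩

end IntegerVectors

section Classification

variable {Ξ : Matrix (Fin 2) (Fin 2) ℤ} {p q p' q' : ℤ}

lemma eq_of_intMulMap_fixes_one_zero (hΞ : IsUnit Ξ.det) (hq : 0 < q) (hq' : 0 < q')
    (hp0 : 0 ≤ p) (hpq : p < q) (hp0' : 0 ≤ p') (hpq' : p' < q')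
    (h₁ : intMulMap Ξ (1, 0) = (1, 0)) (h₂ : intMulMap Ξ (p, q) = (p', q')) :
    q' = q ∧ p' = p := by
  simp only [intMulMap, Prod.ext_iff, mul_one, mul_zero, add_zero] at h₁ h₂
  rw [Int.isUnit_iff, Matrix.det_fin_two] at hΞ
  simp only [h₁.1, h₁.2, one_mul, zero_mul, mul_zero, sub_zero, zero_add] at hΞ h₂
  have hd : Ξ 1 1 = 1 := hΞ.resolve_right fun h => by nlinarith [h₂.2]
  have hqq : q' = q := by rw [← h₂.2, hd, one_mul]
  refine ⟨hqq, ?_⟩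
  -- p' ≡ p (mod q) and both are reduced residues
  have hmod : p' % q = p % q := by rw [← h₂.1]; simp
  rwa [Int.emod_eq_of_lt hp0' (hqq ▸ hpq'), Int.emod_eq_of_lt hp0 hpq] at hmod

lemma modEq_of_intMulMap_swaps (hΞ : IsUnit Ξ.det) (hq : 0 < q) (hq' : 0 < q')
    (h₁ : intMulMap Ξ (1, 0) = (p', q')) (h₂ : intMulMap Ξ (p, q) = (1, 0)) :
    q' = q ∧ p * p' ≡ 1 [ZMOD q] := by
  simp only [intMulMap, Prod.ext_iff, mul_one, mul_zero, add_zero] at h₁ h₂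
  rw [Int.isUnit_iff, Matrix.det_fin_two, h₁.1, h₁.2] at hΞ
  obtain ⟨ha, hc⟩ := h₁
  rw [ha, hc] at h₂
  -- q' = q' (p' p + Ξ 0 1 q) and q' p = -Ξ 1 1 q
  have hq'q : q' = -(p' * Ξ 1 1 - Ξ 0 1 * q') * q := by
    linear_combination (-q') * h₂.1 + p' * h₂.2
  obtain rfl : q' = q := by
    rcases hΞ with h | h <;> rw [h] at hq'q <;> linarith
  exact ⟨rfl, Int.modEq_iff_dvd.2 ⟨Ξ 0 1, by linear_combination -h₂.1⟩⟩

lemma mulMap_image_cone2_socius {p q p' k : ℤ} (hk : 1 - p * p' = q * k) :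
    mulMap !![p', k; q, -p] '' cone2 (castPair (1, 0)) (castPair (p, q)) =
      cone2 (castPair (1, 0)) (castPair (p', q)) := by
  rw [mulMap_image_cone2, mulMap_castPair, mulMap_castPair, cone2_comm]
  congr 2
  · simp only [intMulMap, Matrix.of_apply, Matrix.cons_val', Matrix.cons_val_zero,
      Matrix.cons_val_one, Matrix.empty_val', Matrix.cons_val_fin_one, Prod.ext_iff]
    exact ⟨by linear_combination -hk, by ring⟩
  · simp [intMulMap]

end Classification

/-- for σ = ℝ≥0·(1,0) + ℝ≥0·(p,q) and τ = ℝ≥0·(1,0) + ℝ≥0·(p',q'),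
there exists Ξ ∈ GL₂(ℤ) with Ξ·σ = τ iff q' = q and (p' = p or p·p' ≡ 1 (mod q)). -/
theorem stmt3 (p q p' q' : ℤ)
    (hp0 : 0 ≤ p) (hpq : p < q) (hgcd : Int.gcd p q = 1)
    (hp0' : 0 ≤ p') (hpq' : p' < q') (hgcd' : Int.gcd p' q' = 1) :
    (∃ Ξ : Matrix (Fin 2) (Fin 2) ℤ, (Ξ.det = 1 ∨ Ξ.det = -1) ∧
        mulMap Ξ '' cone2 (1, 0) ((p : ℝ), (q : ℝ)) = cone2 (1, 0) ((p' : ℝ), (q' : ℝ))) ↔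
      (q' = q ∧ (p' = p ∨ Int.ModEq q (p * p') 1)) := by
  have hq : 0 < q := hp0.trans_lt hpq
  have hq' : 0 < q' := hp0'.trans_lt hpq'
  have hcone (x y : ℤ) :
      cone2 (1, 0) ((x : ℝ), (y : ℝ)) = cone2 (castPair (1, 0)) (castPair (x, y)) := by
    simp [castPair]
  simp only [hcone]
  constructor
  · rintro ⟨Ξ, hΞ, h⟩
    replace hΞ := Int.isUnit_iff.2 hΞ
    rcases intMulMap_eq_of_image_cone2_eq hΞ isCoprime_one_left
      (Int.isCoprime_iff_gcd_eq_one.2 hgcd) isCoprime_one_left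
      (Int.isCoprime_iff_gcd_eq_one.2 hgcd') (linearIndependent_castPair_one_zero hq'.ne') h with ⟨h₁, h₂⟩ | ⟨h₁, h₂⟩
    · exact (eq_of_intMulMap_fixes_one_zero hΞ hq hq' hp0 hpq hp0' hpq' h₁ h₂).imp_right .inl
    · exact (modEq_of_intMulMap_swaps hΞ hq hq' h₁ h₂).imp_right .inr
  · rintro ⟨rfl, rfl | hmod⟩
    · refine ⟨1, .inl Matrix.det_one, ?_⟩
      rw [show mulMap 1 = id from funext fun x => by simp [mulMap], Set.image_id]
    · obtain ⟨k, hk⟩ := Int.modEq_iff_dvd.1 hmod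
      refine ⟨!![p', k; q', -p], ?_, mulMap_image_cone2_socius hk⟩
      rw [Matrix.det_fin_two_of]
      exact .inr (by linear_combination hk)
end

section
/- Let p ≥ 1 be an integer and let Q be an LDP-polygon such that (1,−1) and (p,1) are vertices of Q joined by an edge, (−1,0) is a vertex of Q, and every edge of Q other than conv({(1,−1),(p,1)}) has endpoints u, v satisfying |det(u,v)| = 1. Then the vertex set of Q satisfies {(1,−1),(p,1),(−1,0)} ⊆ V(Q) ⊆ {(1,−1),(p,1),(p−1,1),(−1,0),(0,−1)}; consequently Q is one of the four polygons Q_p^[1], Q_p^[2], Q̌_p^[2] := conv({(1,−1),(p,1),(−1,0),(0,−1)}), or Q_p^[3]. -/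
/-- An LDP-polygon: a convex polygon in ℝ² (convex hull of finitely many points) containing
the origin in its interior, all of whose vertices are primitive lattice points. -/
def IsLDPpolygon (Q : Set (ℝ × ℝ)) : Prop :=
  (∃ F : Finset (ℝ × ℝ), Q = convexHull ℝ (F : Set (ℝ × ℝ))) ∧
  ((0, 0) : ℝ × ℝ) ∈ interior Q ∧
  ∀ z ∈ Set.extremePoints ℝ Q, ∃ a b : ℤ, z = ((a : ℝ), (b : ℝ)) ∧ Int.gcd a b = 1

/-- `u` and `v` are the endpoints of an edge (one-dimensional face) of the convex polygon `Q`. -/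
def IsEdge (Q : Set (ℝ × ℝ)) (u v : ℝ × ℝ) : Prop :=
  u ≠ v ∧ u ∈ Set.extremePoints ℝ Q ∧ v ∈ Set.extremePoints ℝ Q ∧
  segment ℝ u v ⊆ frontier Q

/-- Q_p^[1] := conv({(1,−1),(p,1),(−1,0)}). -/
def Qpoly1 (p : ℤ) : Set (ℝ × ℝ) :=
  convexHull ℝ ({(1, -1), ((p : ℝ), 1), (-1, 0)} : Set (ℝ × ℝ))

/-- Q_p^[2] := conv({(1,−1),(p,1),(p−1,1),(−1,0)}). -/
def Qpoly2 (p : ℤ) : Set (ℝ × ℝ) :=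
  convexHull ℝ ({(1, -1), ((p : ℝ), 1), ((p : ℝ) - 1, 1), (-1, 0)} : Set (ℝ × ℝ))

/-- Q̌_p^[2] := conv({(1,−1),(p,1),(−1,0),(0,−1)}). -/
def QpolyCheck2 (p : ℤ) : Set (ℝ × ℝ) :=
  convexHull ℝ ({(1, -1), ((p : ℝ), 1), (-1, 0), (0, -1)} : Set (ℝ × ℝ))

/-- Q_p^[3] := conv({(1,−1),(p,1),(p−1,1),(−1,0),(0,−1)}). -/
def Qpoly3 (p : ℤ) : Set (ℝ × ℝ) :=
  convexHull ℝ ({(1, -1), ((p : ℝ), 1), ((p : ℝ) - 1, 1), (-1, 0), (0, -1)} : Set (ℝ × ℝ))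

/-!
Walk along the boundary of `Q` from `(p, 1)` counterclockwise and from `(1, -1)` clockwise
towards `c = (-1, 0)`. At each vertex `u` met on the way `(u, c)` is a lattice basis, so the
unimodularity of the next edge forces the next vertex to be `c + n u` with `n ≥ 0`. At the first
step the supporting line of the edge `[(1, -1), (p, 1)]` gives `n ≤ 1` (for `p = 1`, `n = 2`
would put three vertices on that line); at the second step the supporting line of the first
edge gives `n ≤ 1`, and `n = 1` would make `u + c` the midpoint of two vertices. Hence the
boundary runs `(p, 1), [(p - 1, 1)], (-1, 0)` above and `(1, -1), [(0, -1)], (-1, 0)` below, and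
the supporting half-planes of these edges leave only the five listed lattice points and
`(1, 0)`, which is not a vertex since it lies in the triangle spanned by `0`, `(1, -1)`, `(p, 1)`.
-/

section Convex

variable {E : Type*} [AddCommGroup E] [Module ℝ E] {Q : Set E} {x y z : E}

theorem eq_of_mem_extremePoints_of_eq_add_smul (hQ : Convex ℝ Q) (h0 : (0 : E) ∈ Q)
    (hx : x ∈ Q.extremePoints ℝ) (hy : y ∈ Q) (hz : z ∈ Q) {a b : ℝ} (ha : 0 < a) (ha₁ : a < 1)
    (hb : 0 ≤ b) (hab : a + b ≤ 1) (h : x = a • y + b • z) : x = y := by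
  have h1a : 1 - a ≠ 0 := by linarith
  have hz' : (b / (1 - a)) • z ∈ Q := hQ.smul_mem_of_zero_mem h0 hz
    ⟨div_nonneg hb (by linarith), (div_le_one (by linarith)).2 (by linarith)⟩
  refine (hx.2 hy hz' ⟨a, 1 - a, ha, by linarith, by ring, ?_⟩).symm
  rw [h, smul_smul, mul_div_cancel₀ _ h1a]

theorem eq_of_mem_extremePoints_of_smul_eq (hQ : Convex ℝ Q) (h0 : (0 : E) ∈ Q)
    (hx : x ∈ Q.extremePoints ℝ) (hy : y ∈ Q) (hz : z ∈ Q) {d a b : ℝ} (hd : 0 < d) (ha : 0 < a)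
    (hb : b ≤ 0) (hlt : d < a + b) (h : d • y = a • x + b • z) : x = y := by
  refine eq_of_mem_extremePoints_of_eq_add_smul hQ h0 hx hy hz (a := d / a) (b := -b / a)
    (div_pos hd ha) ((div_lt_one ha).2 (by linarith)) (div_nonneg (by linarith) ha.le)
    (by rw [← add_div, div_le_one ha]; linarith) ?_
  rw [div_eq_inv_mul, div_eq_inv_mul, mul_smul, mul_smul, ← smul_add, h, neg_smul,
    add_neg_cancel_right, inv_smul_smul₀ ha.ne']

variable [TopologicalSpace E] [IsTopologicalAddGroup E] [ContinuousSMul ℝ E]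

theorem StrongDual.lt_of_mem_interior {f : StrongDual ℝ E} (hf : f ≠ 0) {c : ℝ}
    (hQ : ∀ q ∈ Q, f q ≤ c) (hx : x ∈ interior Q) : f x < c := by
  have : f '' interior Q ⊆ Set.Iio c := by
    rw [← interior_Iic]
    exact ((f.isOpenMap_of_ne_zero hf).image_interior_subset Q).trans
      (interior_mono (Set.image_subset_iff.2 hQ))
  exact this ⟨x, hx, rfl⟩

theorem segment_subset_frontier_of_forall_le (hQ : Convex ℝ Q) (hy : y ∈ Q) (hz : z ∈ Q)
    {f : StrongDual ℝ E} (hf : f ≠ 0) {c : ℝ} (hQc : ∀ q ∈ Q, f q ≤ c) (hfy : f y = c)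
    (hfz : f z = c) : segment ℝ y z ⊆ frontier Q := by
  intro q hq
  refine ⟨subset_closure (hQ.segment_subset hy hz hq), fun hint => ?_⟩
  have hlt := StrongDual.lt_of_mem_interior hf hQc hint
  obtain ⟨a, b, -, -, hab, rfl⟩ := hq
  simp only [map_add, map_smul, smul_eq_mul, hfy, hfz, ← add_mul, hab, one_mul] at hlt
  exact hlt.false

theorem exists_strongDual_eq_one_of_segment_subset_frontier (hQ : Convex ℝ Q)
    (h0 : (0 : E) ∈ interior Q) (hy : y ∈ Q) (hz : z ∈ Q) (hyz : segment ℝ y z ⊆ frontier Q) :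
    ∃ f : StrongDual ℝ E, (∀ q ∈ Q, f q ≤ 1) ∧ f y = 1 ∧ f z = 1 := by
  have hdisj : Disjoint (interior Q) (segment ℝ y z) :=
    disjoint_interior_frontier.mono_right hyz
  obtain ⟨f, c, hf, hfQ, hfseg⟩ := geometric_hahn_banach_of_nonempty_interior hQ
    (convex_segment y z) hdisj ⟨0, h0⟩ ⟨y, left_mem_segment ℝ y z⟩
  have hc : 0 < c := by simpa using StrongDual.lt_of_mem_interior hf hfQ h0
  refine ⟨c⁻¹ • f, fun q hq => ?_, ?_, ?_⟩
  · simpa [inv_mul_le_one₀ hc] using hfQ q hq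
  · simp [le_antisymm (hfQ y hy) (hfseg y (left_mem_segment ℝ y z)), hc.ne']
  · simp [le_antisymm (hfQ z hz) (hfseg z (right_mem_segment ℝ y z)), hc.ne']

end Convex

def det (u v : ℝ × ℝ) : ℝ := u.1 * v.2 - u.2 * v.1

def detDual (d : ℝ × ℝ) : StrongDual ℝ (ℝ × ℝ) :=
  d.2 • ContinuousLinearMap.fst ℝ ℝ ℝ - d.1 • ContinuousLinearMap.snd ℝ ℝ ℝ

@[simp]
theorem detDual_apply (d z : ℝ × ℝ) : detDual d z = det z d := by
  simp [detDual, det]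
  ring

theorem detDual_ne_zero {d : ℝ × ℝ} (hd : d ≠ 0) : detDual d ≠ 0 := by
  intro h
  have h₁ := congrArg (fun f : StrongDual ℝ (ℝ × ℝ) => f (1, 0)) h
  have h₂ := congrArg (fun f : StrongDual ℝ (ℝ × ℝ) => f (0, 1)) h
  simp [det] at h₁ h₂
  exact hd (Prod.ext h₂ h₁)

theorem det_smul_eq_add (u v w : ℝ × ℝ) : det u v • w = det w v • u + det u w • v := by
  ext <;> simp [det] <;> ring

structure IsPolygonAroundOrigin (Q : Set (ℝ × ℝ)) : Prop where
  finite_extremePoints : (Q.extremePoints ℝ).Finite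
  convexHull_extremePoints : convexHull ℝ (Q.extremePoints ℝ) = Q
  zero_mem_interior : (0 : ℝ × ℝ) ∈ interior Q

namespace IsPolygonAroundOrigin

variable {Q : Set (ℝ × ℝ)} {u w c : ℝ × ℝ} {ε : ℝ}

theorem convex (hQ : IsPolygonAroundOrigin Q) : Convex ℝ Q := by
  rw [← hQ.convexHull_extremePoints]
  exact convex_convexHull ℝ _

theorem zero_mem (hQ : IsPolygonAroundOrigin Q) : (0 : ℝ × ℝ) ∈ Q :=
  interior_subset hQ.zero_mem_interior

theorem ne_zero_of_mem_extremePoints (hQ : IsPolygonAroundOrigin Q)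
    (hu : u ∈ Q.extremePoints ℝ) : u ≠ 0 := by
  rintro rfl
  exact Set.disjoint_left.1 (disjoint_interior_extremePoints Q) hQ.zero_mem_interior hu

theorem forall_le_of_forall_extremePoints (hQ : IsPolygonAroundOrigin Q) (f : StrongDual ℝ (ℝ × ℝ))
    {c : ℝ} (hf : ∀ z ∈ Q.extremePoints ℝ, f z ≤ c) : ∀ z ∈ Q, f z ≤ c := by
  rw [← hQ.convexHull_extremePoints]
  exact convexHull_min hf (convex_halfSpace_le f.isLinear c)

theorem exists_mem_extremePoints_det_pos (hQ : IsPolygonAroundOrigin Q) (hε : ε ≠ 0)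
    (hu : u ∈ Q.extremePoints ℝ) : ∃ z ∈ Q.extremePoints ℝ, 0 < ε * det u z := by
  by_contra! h
  have hd : -(ε • u) ≠ 0 := by
    simpa [hε] using hQ.ne_zero_of_mem_extremePoints hu
  have hQd := hQ.forall_le_of_forall_extremePoints (detDual (-(ε • u))) (c := 0) fun z hz => by
    simpa [det, mul_sub, mul_comm, mul_left_comm] using h z hz
  simpa [det] using StrongDual.lt_of_mem_interior (detDual_ne_zero hd) hQd hQ.zero_mem_interior

theorem exists_mem_extremePoints_det_pos_minimal (hQ : IsPolygonAroundOrigin Q) (hε : ε ≠ 0)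
    (hu : u ∈ Q.extremePoints ℝ) :
    ∃ w ∈ Q.extremePoints ℝ, 0 < ε * det u w ∧
      ∀ z ∈ Q.extremePoints ℝ, 0 < ε * det u z → 0 ≤ ε * det w z := by
  set S := {z ∈ Q.extremePoints ℝ | 0 < ε * det u z}
  obtain ⟨z₀, hz₀⟩ := hQ.exists_mem_extremePoints_det_pos hε hu
  -- maximize the cotangent of the angle from `u`
  obtain ⟨w, ⟨hw, hwpos⟩, hmax⟩ := Set.exists_max_image S
    (fun z => (z.1 * u.1 + z.2 * u.2) / (ε * det u z))
    (hQ.finite_extremePoints.subset fun z hz => hz.1) ⟨z₀, hz₀⟩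
  refine ⟨w, hw, hwpos, fun z hz hzpos => ?_⟩
  have hle := (div_le_div_iff₀ hzpos hwpos).1 (hmax z ⟨hz, hzpos⟩)
  have hu0 : 0 < u.1 ^ 2 + u.2 ^ 2 := by
    obtain h | h : u.1 ≠ 0 ∨ u.2 ≠ 0 := by
      by_contra! h
      exact hQ.ne_zero_of_mem_extremePoints hu (Prod.ext h.1 h.2)
    all_goals positivity
  have hid : (u.1 ^ 2 + u.2 ^ 2) * (ε * det w z) =
      (w.1 * u.1 + w.2 * u.2) * (ε * det u z) - (z.1 * u.1 + z.2 * u.2) * (ε * det u w) := by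
    simp only [det]; ring
  exact nonneg_of_mul_nonneg_right (hid ▸ sub_nonneg.2 hle) hu0

theorem det_sub_nonpos_of_minimal (hQ : IsPolygonAroundOrigin Q) (hu : u ∈ Q.extremePoints ℝ)
    (hw : w ∈ Q.extremePoints ℝ) (hpos : 0 < ε * det u w)
    (hmin : ∀ z ∈ Q.extremePoints ℝ, 0 < ε * det u z → 0 ≤ ε * det w z) :
    ∀ z ∈ Q.extremePoints ℝ, ε * det (z - u) (w - u) ≤ 0 := by
  intro z hz
  by_contra! hgt
  have hsum : ε * det u w < ε * det u z + ε * det z w := by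
    have : ε * det (z - u) (w - u) = ε * det u z + ε * det z w - ε * det u w := by
      simp only [det, Prod.fst_sub, Prod.snd_sub]; ring
    linarith
  have hcramer : (ε * det u w) • z = (ε * det u z) • w + (ε * det z w) • u := by
    rw [mul_smul, mul_smul, mul_smul, det_smul_eq_add, smul_add, add_comm]
  -- Cramer's rule now exhibits `w` or `u` as a proper combination of `z`, the other one and `0`
  rcases lt_or_ge 0 (ε * det u z) with hα | hα
  · have hβ : ε * det z w ≤ 0 := by
      have := hmin z hz hα
      simp only [det] at this ⊢
      linarith
    obtain rfl := eq_of_mem_extremePoints_of_smul_eq hQ.convex hQ.zero_mem hw hz.1 hu.1 hpos hα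
      hβ hsum hcramer
    exact hgt.ne' (by simp only [det]; ring)
  · have hβ : 0 < ε * det z w := by linarith
    obtain rfl := eq_of_mem_extremePoints_of_smul_eq hQ.convex hQ.zero_mem hu hz.1 hw.1 hpos hβ
      hα (by linarith) (by rw [hcramer, add_comm])
    simp [det] at hgt

theorem exists_isEdge (hQ : IsPolygonAroundOrigin Q) (hε : ε ≠ 0) (hu : u ∈ Q.extremePoints ℝ) :
    ∃ w ∈ Q.extremePoints ℝ, 0 < ε * det u w ∧
      (∀ z ∈ Q.extremePoints ℝ, 0 < ε * det u z → 0 ≤ ε * det w z) ∧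
      (∀ z ∈ Q, ε * det (z - u) (w - u) ≤ 0) ∧ IsEdge Q u w := by
  obtain ⟨w, hw, hpos, hmin⟩ := hQ.exists_mem_extremePoints_det_pos_minimal hε hu
  have huw : u ≠ w := by
    rintro rfl
    simp [det, mul_comm] at hpos
  have hd : ε • (w - u) ≠ 0 := smul_ne_zero hε (sub_ne_zero.2 huw.symm)
  have hdual : ∀ z, detDual (ε • (w - u)) z = ε * det (z - u) (w - u) + ε * det u w := by
    intro z; simp only [detDual_apply, det, Prod.smul_fst, Prod.smul_snd, Prod.fst_sub,
      Prod.snd_sub, smul_eq_mul]; ring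
  have hQd : ∀ z ∈ Q, detDual (ε • (w - u)) z ≤ ε * det u w :=
    hQ.forall_le_of_forall_extremePoints _ fun z hz => by
      linarith [hdual z, hQ.det_sub_nonpos_of_minimal hu hw hpos hmin z hz]
  refine ⟨w, hw, hpos, hmin, fun z hz => by linarith [hdual z, hQd z hz], huw, hu, hw,
    segment_subset_frontier_of_forall_le hQ.convex hu.1 hw.1 (detDual_ne_zero hd) hQd ?_ ?_⟩
  · simp [hdual, det]
  · rw [hdual, add_eq_right, mul_eq_zero]
    exact Or.inr (by simp only [det]; ring)

theorem exists_nat_add_smul_mem_extremePoints (hQ : IsPolygonAroundOrigin Q)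
    (hlat : ∀ z ∈ Q.extremePoints ℝ, ∃ a b : ℤ, z = ((a : ℝ), (b : ℝ))) (hε : ε = 1 ∨ ε = -1)
    (hu : u ∈ Q.extremePoints ℝ) (hc : c ∈ Q.extremePoints ℝ) (huc : ε * det u c = 1)
    (hunimod : ∀ w, IsEdge Q u w → 0 < ε * det u w → |det u w| = 1) :
    ∃ n : ℕ, c + (n : ℝ) • u ∈ Q.extremePoints ℝ ∧
      ∀ z ∈ Q, ε * det (z - u) (c + (n : ℝ) • u - u) ≤ 0 := by
  have hε₀ : ε ≠ 0 := by rcases hε with rfl | rfl <;> norm_num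
  obtain ⟨w, hw, hpos, hmin, hhalf, hedge⟩ := hQ.exists_isEdge hε₀ hu
  have hεw : ε * det u w = 1 := by
    rw [← abs_of_pos hpos, abs_mul, hunimod w hedge hpos, mul_one]
    rcases hε with rfl | rfl <;> norm_num
  obtain ⟨k, hk⟩ : ∃ k : ℤ, ε * det w c = k := by
    obtain ⟨a, b, rfl⟩ := hlat w hw
    obtain ⟨a', b', rfl⟩ := hlat c hc
    rcases hε with rfl | rfl
    · exact ⟨a * b' - b * a', by simp [det]⟩
    · exact ⟨b * a' - a * b', by simp [det]⟩
  have hk₀ : 0 ≤ k := by exact_mod_cast hk ▸ hmin c hc (huc ▸ one_pos)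
  lift k to ℕ using hk₀
  -- Cramer's rule in the lattice basis `(u, c)`
  have hwc : w = c + (k : ℝ) • u := by
    have h := congrArg (ε • ·) (det_smul_eq_add u c w)
    simp only [smul_add, smul_smul, huc, hεw, hk, one_smul] at h
    rw [h, add_comm]
    norm_cast
  exact ⟨k, hwc ▸ hw, hwc ▸ hhalf⟩

/-- The boundary of `Q` from `u` towards `c` (in the direction given by `ε`) is `u, c` or
`u, u + c, c`; the two disjuncts are the supporting half-planes of its edges. -/
theorem det_nonpos_of_unimodular (hQ : IsPolygonAroundOrigin Q)
    (hlat : ∀ z ∈ Q.extremePoints ℝ, ∃ a b : ℤ, z = ((a : ℝ), (b : ℝ))) (hε : ε = 1 ∨ ε = -1)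
    (hu : u ∈ Q.extremePoints ℝ) (hc : c ∈ Q.extremePoints ℝ) (huc : ε * det u c = 1)
    (hunimod : ∀ v ∈ ({u, u + c} : Set (ℝ × ℝ)), ∀ w, IsEdge Q v w → 0 < ε * det v w →
      |det v w| = 1)
    (hfar : ∀ n : ℕ, 2 ≤ n → c + (n : ℝ) • u ∉ Q.extremePoints ℝ) :
    ∀ z ∈ Q, ε * det (z - u) (c - u) ≤ 0 ∨
      (ε * det (z - u) c ≤ 0 ∧ ε * det (z - (u + c)) (-u) ≤ 0) := by
  obtain ⟨n, hn, hhalf⟩ :=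
    hQ.exists_nat_add_smul_mem_extremePoints hlat hε hu hc huc (hunimod u (by simp))
  obtain _ | _ | n := n
  · exact fun z hz => Or.inl (by simpa using hhalf z hz)
  swap
  · exact absurd hn (hfar _ (by omega))
  have hu' : u + c ∈ Q.extremePoints ℝ := by simpa [add_comm] using hn
  have huc' : ε * det (u + c) c = 1 := by
    rw [← huc]; simp only [det, Prod.fst_add, Prod.snd_add]; ring
  obtain ⟨m, hm, hhalf'⟩ :=
    hQ.exists_nat_add_smul_mem_extremePoints hlat hε hu' hc huc' (hunimod (u + c) (by simp))
  obtain _ | _ | m := m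
  · refine fun z hz => Or.inr ⟨by simpa using hhalf z hz, by simpa using hhalf' z hz⟩
  · -- `u + c` would be the midpoint of the vertices `u` and `u + 2c`
    have h := eq_of_mem_extremePoints_of_eq_add_smul hQ.convex hQ.zero_mem hu' hu.1 hm.1
      (a := 1 / 2) (b := 1 / 2) (by norm_num) (by norm_num) (by norm_num) (by norm_num)
      (by ext <;> simp <;> ring)
    simp [show c = 0 by simpa using h, det] at huc
  · have h := hhalf _ hm.1
    have : ε * det (c + ((m + 2 : ℕ) : ℝ) • (u + c) - u) (c + ((1 : ℕ) : ℝ) • u - u) =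
        (m + 1) * (ε * det u c) := by
      simp only [det, Prod.fst_add, Prod.snd_add, Prod.fst_sub, Prod.snd_sub, Prod.smul_fst,
        Prod.smul_snd, smul_eq_mul]; push_cast; ring
    rw [this, huc] at h
    linarith

end IsPolygonAroundOrigin

theorem Set.eq_or_eq_or_eq_or_eq_of_subset_of_subset {α : Type*} {V : Set α} {a b c d e : α}
    (h₁ : {a, b, c} ⊆ V) (h₂ : V ⊆ {a, b, d, c, e}) :
    V = {a, b, c} ∨ V = {a, b, d, c} ∨ V = {a, b, c, e} ∨ V = {a, b, d, c, e} := by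
  simp only [Set.insert_subset_iff, Set.singleton_subset_iff] at h₁
  by_cases hd : d ∈ V <;> by_cases he : e ∈ V
  on_goal 1 => refine Or.inr (Or.inr (Or.inr ?_))
  on_goal 2 => refine Or.inr (Or.inl ?_)
  on_goal 3 => refine Or.inr (Or.inr (Or.inl ?_))
  on_goal 4 => refine Or.inl ?_
  all_goals
    exact Set.Subset.antisymm
      (fun x hx => by rcases h₂ hx with rfl | rfl | rfl | rfl | rfl <;> simp_all)
      (by simp [Set.insert_subset_iff, *])

theorem IsLDPpolygon.isPolygonAroundOrigin {Q : Set (ℝ × ℝ)} (hQ : IsLDPpolygon Q) :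
    IsPolygonAroundOrigin Q := by
  obtain ⟨⟨F, rfl⟩, h0, -⟩ := hQ
  have hfin : ((convexHull ℝ (F : Set (ℝ × ℝ))).extremePoints ℝ).Finite :=
    F.finite_toSet.subset extremePoints_convexHull_subset
  refine ⟨hfin, ?_, h0⟩
  have hcl := closure_convexHull_extremePoints (F.finite_toSet.isCompact_convexHull ℝ)
    (convex_convexHull ℝ _)
  rwa [(hfin.isCompact_convexHull ℝ).isClosed.closure_eq] at hcl

theorem IsLDPpolygon.exists_int_of_mem_extremePoints {Q : Set (ℝ × ℝ)} (hQ : IsLDPpolygon Q) :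
    ∀ z ∈ Q.extremePoints ℝ, ∃ a b : ℤ, z = ((a : ℝ), (b : ℝ)) :=
  fun z hz => (hQ.2.2 z hz).imp fun _ => Exists.imp fun _ h => h.1

section Configuration

variable {p : ℤ} {Q : Set (ℝ × ℝ)}

theorem two_mul_sub_le_of_isEdge (hp : 1 ≤ p) (hQ : IsPolygonAroundOrigin Q)
    (hedge : IsEdge Q (1, -1) ((p : ℝ), 1)) : ∀ z ∈ Q, 2 * z.1 - (p - 1) * z.2 ≤ p + 1 := by
  obtain ⟨f, hfQ, hA, hB⟩ := exists_strongDual_eq_one_of_segment_subset_frontier hQ.convex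
    hQ.zero_mem_interior hedge.2.1.1 hedge.2.2.1.1 hedge.2.2.2
  have hf : ∀ z : ℝ × ℝ, f z = z.1 * f (1, 0) + z.2 * f (0, 1) := by
    intro z
    rw [← smul_eq_mul, ← smul_eq_mul, ← map_smul, ← map_smul, ← map_add]
    congr 1; ext <;> simp
  rw [hf] at hA hB
  simp only [one_mul, neg_mul] at hA hB
  have hp₁ : (0 : ℝ) < p + 1 := by linarith [show (1 : ℝ) ≤ p by exact_mod_cast hp]
  have h₁₀ : f (1, 0) * (p + 1) = 2 := by linear_combination hB + hA
  have h₀₁ : f (0, 1) * (p + 1) = 1 - p := by linear_combination hB - (p : ℝ) * hA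
  intro z hz
  have h := mul_le_mul_of_nonneg_right ((hf z).symm.trans_le (hfQ z hz)) hp₁.le
  linear_combination h - z.1 * h₁₀ - z.2 * h₀₁

theorem abs_det_eq_one_of_isEdge
    (hlat : ∀ z ∈ Q.extremePoints ℝ, ∃ a b : ℤ, z = ((a : ℝ), (b : ℝ)))
    (hbasic : ∀ a b c d : ℤ, IsEdge Q ((a : ℝ), (b : ℝ)) ((c : ℝ), (d : ℝ)) →
      ({((a : ℝ), (b : ℝ)), ((c : ℝ), (d : ℝ))} : Set (ℝ × ℝ)) ≠
        ({(1, -1), ((p : ℝ), 1)} : Set (ℝ × ℝ)) →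
      |a * d - b * c| = 1)
    {v w : ℝ × ℝ} (hvw : IsEdge Q v w) (h₁ : ¬(v = (1, -1) ∧ w = ((p : ℝ), 1)))
    (h₂ : ¬(v = ((p : ℝ), 1) ∧ w = (1, -1))) : |det v w| = 1 := by
  obtain ⟨a, b, rfl⟩ := hlat v hvw.2.1
  obtain ⟨c, d, rfl⟩ := hlat w hvw.2.2.1
  have h := hbasic a b c d hvw (by rw [Ne, Set.pair_eq_pair_iff]; tauto)
  simp only [det]
  exact_mod_cast h

theorem neg_one_zero_add_smul_notMem_extremePoints (hQ : IsPolygonAroundOrigin Q)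
    (hAB : ∀ z ∈ Q, 2 * z.1 - (p - 1) * z.2 ≤ p + 1) (hp : 1 ≤ p) {u v : ℝ × ℝ}
    (hu : u ∈ Q.extremePoints ℝ) (hv : v ∈ Q) (huv : u ≠ v)
    (hline : 2 * u.1 - (p - 1) * u.2 = p + 1) (hsum : u + v = ((p : ℝ) + 1, 0))
    {n : ℕ} (hn : 2 ≤ n) : (-1, 0) + (n : ℝ) • u ∉ Q.extremePoints ℝ := by
  intro hmem
  have key : (n : ℝ) * (p + 1) ≤ p + 3 := by
    have h := hAB _ hmem.1
    simp only [Prod.fst_add, Prod.snd_add, Prod.smul_fst, Prod.smul_snd, smul_eq_mul] at h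
    linear_combination h - (n : ℝ) * hline
  obtain ⟨rfl, rfl⟩ : p = 1 ∧ n = 2 := by
    have : (n : ℤ) * (p + 1) ≤ p + 3 := by exact_mod_cast key
    constructor <;> nlinarith
  -- for `p = 1`, `u` lies between `v` and `(-1, 0) + 2 u`
  refine huv (eq_of_mem_extremePoints_of_eq_add_smul hQ.convex hQ.zero_mem hu hv hmem.1
    (a := 1 / 3) (b := 2 / 3) (by norm_num) (by norm_num) (by norm_num) (by norm_num) ?_)
  have h₁ := congrArg Prod.fst hsum
  have h₂ := congrArg Prod.snd hsum
  simp only [Prod.fst_add, Prod.snd_add] at h₁ h₂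
  ext <;> simp <;> push_cast at h₁ <;> linarith

theorem upper_boundary_bound (hp : 1 ≤ p) (hQ : IsPolygonAroundOrigin Q)
    (hlat : ∀ z ∈ Q.extremePoints ℝ, ∃ a b : ℤ, z = ((a : ℝ), (b : ℝ)))
    (hunimod : ∀ v w, IsEdge Q v w → ¬(v = (1, -1) ∧ w = ((p : ℝ), 1)) →
      ¬(v = ((p : ℝ), 1) ∧ w = (1, -1)) → |det v w| = 1)
    (hedge : IsEdge Q (1, -1) ((p : ℝ), 1)) (hvert : ((-1, 0) : ℝ × ℝ) ∈ Q.extremePoints ℝ) :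
    ∀ z ∈ Q, (p + 1) * z.2 - z.1 ≤ 1 ∨ (z.2 ≤ 1 ∧ p * z.2 - z.1 ≤ 1) := by
  have hAB := two_mul_sub_le_of_isEdge hp hQ hedge
  have h := hQ.det_nonpos_of_unimodular hlat (Or.inl rfl) hedge.2.2.1 hvert (by simp [det]) ?_
    fun n hn => neg_one_zero_add_smul_notMem_extremePoints hQ hAB hp hedge.2.2.1 hedge.2.1.1
      (by norm_num) (by simp; ring) (by ext <;> simp) hn
  · intro z hz
    rcases h z hz with h | ⟨h₁, h₂⟩
    · left; simp [det] at h; linarith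
    · right; simp [det] at h₁ h₂; constructor <;> linarith
  rintro v hv w hvw hpos
  refine hunimod v w hvw ?_ ?_
  · rintro ⟨rfl, -⟩; norm_num at hv
  · rintro ⟨rfl, rfl⟩; simp [det] at hpos; linarith [show (1 : ℝ) ≤ p by exact_mod_cast hp]

theorem lower_boundary_bound (hp : 1 ≤ p) (hQ : IsPolygonAroundOrigin Q)
    (hlat : ∀ z ∈ Q.extremePoints ℝ, ∃ a b : ℤ, z = ((a : ℝ), (b : ℝ)))
    (hunimod : ∀ v w, IsEdge Q v w → ¬(v = (1, -1) ∧ w = ((p : ℝ), 1)) →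
      ¬(v = ((p : ℝ), 1) ∧ w = (1, -1)) → |det v w| = 1)
    (hedge : IsEdge Q (1, -1) ((p : ℝ), 1)) (hvert : ((-1, 0) : ℝ × ℝ) ∈ Q.extremePoints ℝ) :
    ∀ z ∈ Q, -z.1 - 2 * z.2 ≤ 1 ∨ (-1 ≤ z.2 ∧ -z.1 - z.2 ≤ 1) := by
  have hAB := two_mul_sub_le_of_isEdge hp hQ hedge
  have h := hQ.det_nonpos_of_unimodular hlat (Or.inr rfl) hedge.2.1 hvert (by simp [det]) ?_
    fun n hn => neg_one_zero_add_smul_notMem_extremePoints hQ hAB hp hedge.2.1 hedge.2.2.1.1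
      (by norm_num) (by simp; ring) (by ext <;> simp; ring) hn
  · intro z hz
    rcases h z hz with h | ⟨h₁, h₂⟩
    · left; simp [det] at h; linarith
    · right; simp [det] at h₁ h₂; constructor <;> linarith
  rintro v hv w hvw hpos
  refine hunimod v w hvw ?_ ?_
  · rintro ⟨rfl, rfl⟩; simp [det] at hpos; linarith [show (1 : ℝ) ≤ p by exact_mod_cast hp]
  · rintro ⟨rfl, -⟩; norm_num at hv

theorem eq_of_int_bounds {a b : ℤ} (hp : 1 ≤ p) (hab : Int.gcd a b = 1)
    (hAB : 2 * a - (p - 1) * b ≤ p + 1)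
    (hupper : (p + 1) * b - a ≤ 1 ∨ (b ≤ 1 ∧ p * b - a ≤ 1))
    (hlower : -a - 2 * b ≤ 1 ∨ (-1 ≤ b ∧ -a - b ≤ 1)) :
    (a = 1 ∧ b = -1) ∨ (a = p ∧ b = 1) ∨ (a = p - 1 ∧ b = 1) ∨ (a = -1 ∧ b = 0) ∨
      (a = 0 ∧ b = -1) ∨ (a = 1 ∧ b = 0) := by
  have hb₁ : b ≤ 1 := by
    rcases hupper with h | h
    · nlinarith
    · exact h.1
  have hb₂ : -1 ≤ b := by
    rcases hlower with h | h
    · nlinarith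
    · exact h.1
  interval_cases b
  · omega
  · have : a.natAbs = 1 := by simpa using hab
    omega
  · omega

theorem one_zero_notMem_extremePoints (hp : 1 ≤ p) (hQ : IsPolygonAroundOrigin Q)
    (hedge : IsEdge Q (1, -1) ((p : ℝ), 1)) : ((1, 0) : ℝ × ℝ) ∉ Q.extremePoints ℝ := by
  intro h
  have hp₁ : (2 : ℝ) ≤ p + 1 := by linarith [show (1 : ℝ) ≤ p by exact_mod_cast hp]
  have := eq_of_mem_extremePoints_of_eq_add_smul hQ.convex hQ.zero_mem h hedge.2.1.1
    hedge.2.2.1.1 (a := 1 / (p + 1)) (b := 1 / (p + 1)) (by positivity)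
    ((div_lt_one (by linarith)).2 (by linarith)) (by positivity)
    (by rw [← add_div, div_le_one (by linarith)]; linarith)
    (by ext
        · simp; field_simp; ring
        · simp)
  simp at this

theorem IsLDPpolygon.extremePoints_subset (hp : 1 ≤ p) (hQ : IsLDPpolygon Q)
    (hedge : IsEdge Q (1, -1) ((p : ℝ), 1)) (hvert : ((-1, 0) : ℝ × ℝ) ∈ Q.extremePoints ℝ)
    (hbasic : ∀ a b c d : ℤ, IsEdge Q ((a : ℝ), (b : ℝ)) ((c : ℝ), (d : ℝ)) →
      ({((a : ℝ), (b : ℝ)), ((c : ℝ), (d : ℝ))} : Set (ℝ × ℝ)) ≠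
        ({(1, -1), ((p : ℝ), 1)} : Set (ℝ × ℝ)) →
      |a * d - b * c| = 1) :
    Q.extremePoints ℝ ⊆
      ({(1, -1), ((p : ℝ), 1), ((p : ℝ) - 1, 1), (-1, 0), (0, -1)} : Set (ℝ × ℝ)) := by
  have hpoly := hQ.isPolygonAroundOrigin
  have hlat := hQ.exists_int_of_mem_extremePoints
  have hunimod : ∀ v w, IsEdge Q v w → _ → _ → |det v w| = 1 :=
    fun v w hvw => abs_det_eq_one_of_isEdge hlat hbasic hvw
  have hAB := two_mul_sub_le_of_isEdge hp hpoly hedge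
  have hupper := upper_boundary_bound hp hpoly hlat hunimod hedge hvert
  have hlower := lower_boundary_bound hp hpoly hlat hunimod hedge hvert
  intro z hz
  obtain ⟨a, b, rfl, hab⟩ := hQ.2.2 z hz
  have h₁ := hAB _ hz.1
  have h₂ := hupper _ hz.1
  have h₃ := hlower _ hz.1
  simp only at h₁ h₂ h₃
  norm_cast at h₁ h₂ h₃
  rcases eq_of_int_bounds hp hab h₁ h₂ h₃ with
    ⟨rfl, rfl⟩ | ⟨rfl, rfl⟩ | ⟨rfl, rfl⟩ | ⟨rfl, rfl⟩ | ⟨rfl, rfl⟩ | ⟨rfl, rfl⟩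
  · simp
  · simp
  · simp
  · simp
  · simp
  · exact absurd (by simpa using hz) (one_zero_notMem_extremePoints hp hpoly hedge)

end Configuration

/-- if Q is an LDP-polygon with an edge from (1,−1) to (p,1), with (−1,0) a
vertex, and all other edges unimodular, then
{(1,−1),(p,1),(−1,0)} ⊆ V(Q) ⊆ {(1,−1),(p,1),(p−1,1),(−1,0),(0,−1)}; consequently Q is one
of Q_p^[1], Q_p^[2], Q̌_p^[2], Q_p^[3]. -/
theorem stmt5 (p : ℤ) (hp : 1 ≤ p) (Q : Set (ℝ × ℝ)) (hQ : IsLDPpolygon Q)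
    (hedge : IsEdge Q (1, -1) ((p : ℝ), 1))
    (hvert : ((-1, 0) : ℝ × ℝ) ∈ Set.extremePoints ℝ Q)
    (hbasic : ∀ a b c d : ℤ, IsEdge Q ((a : ℝ), (b : ℝ)) ((c : ℝ), (d : ℝ)) →
      ({((a : ℝ), (b : ℝ)), ((c : ℝ), (d : ℝ))} : Set (ℝ × ℝ)) ≠
        ({(1, -1), ((p : ℝ), 1)} : Set (ℝ × ℝ)) →
      |a * d - b * c| = 1) :
    ({(1, -1), ((p : ℝ), 1), (-1, 0)} : Set (ℝ × ℝ)) ⊆ Set.extremePoints ℝ Q ∧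
    Set.extremePoints ℝ Q ⊆
      ({(1, -1), ((p : ℝ), 1), ((p : ℝ) - 1, 1), (-1, 0), (0, -1)} : Set (ℝ × ℝ)) ∧
    (Q = Qpoly1 p ∨ Q = Qpoly2 p ∨ Q = QpolyCheck2 p ∨ Q = Qpoly3 p) := by
  have hsub₁ : ({(1, -1), ((p : ℝ), 1), (-1, 0)} : Set (ℝ × ℝ)) ⊆ Q.extremePoints ℝ := by
    simp only [Set.insert_subset_iff, Set.singleton_subset_iff]
    exact ⟨hedge.2.1, hedge.2.2.1, hvert⟩
  have hsub₂ := hQ.extremePoints_subset hp hedge hvert hbasic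
  refine ⟨hsub₁, hsub₂, ?_⟩
  rw [← hQ.isPolygonAroundOrigin.convexHull_extremePoints]
  rcases Set.eq_or_eq_or_eq_or_eq_of_subset_of_subset hsub₁ hsub₂ with h | h | h | h <;>
    rw [h]
  exacts [Or.inl rfl, Or.inr (Or.inl rfl), Or.inr (Or.inr (Or.inl rfl)),
    Or.inr (Or.inr (Or.inr rfl))]
end

section
/- For every integer p ≥ 1 and every k ∈ {1,2,3}: the area of Q_p^[k] equals (p+k)/2 + 1; the number of lattice points of ℤ² on the boundary ∂Q_p^[k] equals k+2 if p is even and k+3 if p is odd; and the number of lattice points of ℤ² in the interior of Q_p^[k] equals p/2 + 1 if p is even and (p−1)/2 + 1 if p is odd. -/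
/-- Q_p^[k] for k ∈ {1,2,3}. -/
def Qpoly (p : ℤ) (k : ℕ) : Set (ℝ × ℝ) :=
  if k = 1 then Qpoly1 p else if k = 2 then Qpoly2 p else Qpoly3 p

open Set MeasureTheory

theorem interior_setOf_mem_Icc_le_le {L R : ℝ → ℝ} (hL : Continuous L) (hR : Continuous R)
    (c d : ℝ) :
    interior {z : ℝ × ℝ | z.2 ∈ Icc c d ∧ L z.2 ≤ z.1 ∧ z.1 ≤ R z.2} =
      {z | z.2 ∈ Ioo c d ∧ L z.2 < z.1 ∧ z.1 < R z.2} := by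
  apply Subset.antisymm
  · intro z hz
    rw [mem_interior_iff_mem_nhds] at hz
    have h₁ : z.1 ∈ interior (Icc (L z.2) (R z.2)) :=
      interior_mono (fun x hx => hx.2) <| mem_interior_iff_mem_nhds.2 <|
        (Continuous.prodMk_left z.2).continuousAt.preimage_mem_nhds hz
    have h₂ : z.2 ∈ interior (Icc c d) :=
      interior_mono (fun y hy => hy.1) <| mem_interior_iff_mem_nhds.2 <|
        (Continuous.prodMk_right z.1).continuousAt.preimage_mem_nhds hz
    rw [interior_Icc] at h₁ h₂
    exact ⟨h₂, h₁⟩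
  · refine interior_maximal (fun z hz => ⟨Ioo_subset_Icc_self hz.1, hz.2.1.le, hz.2.2.le⟩) ?_
    exact (isOpen_Ioo.preimage continuous_snd).inter
      ((isOpen_lt (hL.comp continuous_snd) continuous_fst).inter
        (isOpen_lt continuous_fst (hR.comp continuous_snd)))

theorem volume_setOf_mem_Ioo_lt_lt {L R : ℝ → ℝ} (hL : Continuous L) (hR : Continuous R)
    {c d : ℝ} (hcd : c ≤ d) (hLR : ∀ y ∈ Ioo c d, L y ≤ R y) :
    volume {z : ℝ × ℝ | z.2 ∈ Ioo c d ∧ L z.2 < z.1 ∧ z.1 < R z.2} =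
      ENNReal.ofReal (∫ y in c..d, (R y - L y)) := by
  have hregion : MeasurableSet (regionBetween L R (Ioo c d)) :=
    measurableSet_regionBetween hL.measurable hR.measurable measurableSet_Ioo
  change volume (Prod.swap ⁻¹' regionBetween L R (Ioo c d)) = _
  rw [Measure.volume_eq_prod, Measure.measurePreserving_swap.measure_preimage
    hregion.nullMeasurableSet, volume_regionBetween_eq_integral
    (hL.integrableOn_Icc.mono_set Ioo_subset_Icc_self)
    (hR.integrableOn_Icc.mono_set Ioo_subset_Icc_self) measurableSet_Ioo hLR,
    intervalIntegral.integral_of_le hcd, integral_Ioc_eq_integral_Ioo]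
  rfl

/-- The edges of `Q_p` through `(-1, 0)`: towards `(p - s, 1)` above the axis, towards
`(1 - t, -1)` below it. -/
def leftEdge (p s t y : ℝ) : ℝ := max ((p + 1 - s) * y - 1) ((t - 2) * y - 1)

/-- The edge of `Q_p` through `(1, -1)` and `(p, 1)`. -/
noncomputable def rightEdge (p y : ℝ) : ℝ := (p + 1 + (p - 1) * y) / 2

def Qregion (p s t : ℝ) : Set (ℝ × ℝ) :=
  {z | z.2 ∈ Icc (-1) 1 ∧ leftEdge p s t z.2 ≤ z.1 ∧ z.1 ≤ rightEdge p z.2}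

theorem continuous_leftEdge (p s t : ℝ) : Continuous (leftEdge p s t) := by
  unfold leftEdge; fun_prop

theorem continuous_rightEdge (p : ℝ) : Continuous (rightEdge p) := by
  unfold rightEdge; fun_prop

theorem convex_Qregion (p s t : ℝ) : Convex ℝ (Qregion p s t) := by
  rintro ⟨x, y⟩ ⟨hy, hl, hr⟩ ⟨x', y'⟩ ⟨hy', hl', hr'⟩ a b ha hb hab
  simp only [Qregion, leftEdge, rightEdge, mem_Icc, max_le_iff, mem_ofPred_eq, Prod.smul_mk,
    Prod.mk_add_mk, smul_eq_mul] at *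
  obtain rfl : b = 1 - a := by linarith
  refine ⟨⟨by nlinarith, by nlinarith⟩, ⟨by nlinarith, by nlinarith⟩, by nlinarith⟩

theorem isClosed_Qregion (p s t : ℝ) : IsClosed (Qregion p s t) :=
  (isClosed_Icc.preimage continuous_snd).inter
    ((isClosed_le ((continuous_leftEdge p s t).comp continuous_snd) continuous_fst).inter
      (isClosed_le continuous_fst ((continuous_rightEdge p).comp continuous_snd)))

theorem convexHull_eq_Qregion {p s t : ℝ} (hs : 0 ≤ s) (ht : 0 ≤ t) (hst : s + t ≤ p + 3) :
    convexHull ℝ {(1, -1), (p, 1), (p - s, 1), (-1, 0), (1 - t, -1)} = Qregion p s t := by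
  apply Subset.antisymm
  · refine convexHull_min ?_ (convex_Qregion p s t)
    rintro z (rfl | rfl | rfl | rfl | rfl) <;>
      simp only [Qregion, leftEdge, rightEdge, mem_ofPred_eq, mem_Icc, max_le_iff] <;>
      refine ⟨⟨by norm_num, by norm_num⟩, ⟨by linarith, by linarith⟩, by linarith⟩
  · set H := convexHull ℝ ({(1, -1), (p, 1), (p - s, 1), (-1, 0), (1 - t, -1)} : Set (ℝ × ℝ))
    have hA : ((1 : ℝ), (-1 : ℝ)) ∈ H := subset_convexHull ℝ _ (by simp)
    have hB : (p, (1 : ℝ)) ∈ H := subset_convexHull ℝ _ (by simp)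
    have hB' : (p - s, (1 : ℝ)) ∈ H := subset_convexHull ℝ _ (by simp)
    have hC : ((-1 : ℝ), (0 : ℝ)) ∈ H := subset_convexHull ℝ _ (by simp)
    have hA' : (1 - t, (-1 : ℝ)) ∈ H := subset_convexHull ℝ _ (by simp)
    rintro ⟨x, y⟩ ⟨⟨hy₁, hy₂⟩, hl, hr⟩
    have hright : (rightEdge p y, y) ∈ H := by
      refine (convex_convexHull ℝ _).segment_subset hA hB
        ⟨(1 - y) / 2, (1 + y) / 2, by linarith, by linarith, by ring, ?_⟩
      simp only [rightEdge, Prod.smul_mk, Prod.mk_add_mk, smul_eq_mul, Prod.mk.injEq]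
      constructor <;> ring
    have hleft : (leftEdge p s t y, y) ∈ H := by
      rcases le_total 0 y with hy | hy
      · refine (convex_convexHull ℝ _).segment_subset hC hB'
          ⟨1 - y, y, by linarith, hy, by ring, ?_⟩
        rw [leftEdge, max_eq_left (by nlinarith)]
        simp only [Prod.smul_mk, Prod.mk_add_mk, smul_eq_mul, Prod.mk.injEq]
        constructor <;> ring
      · refine (convex_convexHull ℝ _).segment_subset hC hA'
          ⟨1 + y, -y, by linarith, by linarith, by ring, ?_⟩
        rw [leftEdge, max_eq_right (by nlinarith)]
        simp only [Prod.smul_mk, Prod.mk_add_mk, smul_eq_mul, Prod.mk.injEq]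
        constructor <;> ring
    refine (convex_convexHull ℝ _).segment_subset hleft hright ?_
    rw [← Prod.image_mk_segment_left, segment_eq_Icc (hl.trans hr)]
    exact mem_image_of_mem _ ⟨hl, hr⟩

theorem interior_Qregion (p s t : ℝ) :
    interior (Qregion p s t) =
      {z | z.2 ∈ Ioo (-1) 1 ∧ leftEdge p s t z.2 < z.1 ∧ z.1 < rightEdge p z.2} :=
  interior_setOf_mem_Icc_le_le (continuous_leftEdge p s t) (continuous_rightEdge p) _ _

theorem integral_const_add_mul (a b c d : ℝ) :
    ∫ y in c..d, (a + b * y) = a * (d - c) + b * (d ^ 2 - c ^ 2) / 2 := by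
  rw [intervalIntegral.integral_add intervalIntegrable_const
    ((continuous_const_mul b).intervalIntegrable c d), intervalIntegral.integral_const_mul,
    integral_id, intervalIntegral.integral_const, smul_eq_mul]
  ring

theorem integral_rightEdge_sub_leftEdge {p s t : ℝ} (hst : s + t ≤ p + 3) :
    ∫ y in (-1 : ℝ)..1, (rightEdge p y - leftEdge p s t y) = (p + 3 + s + t) / 2 := by
  have hcont : Continuous fun y => rightEdge p y - leftEdge p s t y :=
    (continuous_rightEdge p).sub (continuous_leftEdge p s t)
  have hneg : ∫ y in (-1 : ℝ)..0, (rightEdge p y - leftEdge p s t y) =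
      ∫ y in (-1 : ℝ)..0, ((p + 3) / 2 + ((p + 3) / 2 - t) * y) := by
    refine intervalIntegral.integral_congr fun y hy => ?_
    rw [uIcc_of_le (by norm_num), mem_Icc] at hy
    have hmax : (p + 1 - s) * y - 1 ≤ (t - 2) * y - 1 := by nlinarith
    simp only [rightEdge, leftEdge, max_eq_right hmax]
    ring
  have hpos : ∫ y in (0 : ℝ)..1, (rightEdge p y - leftEdge p s t y) =
      ∫ y in (0 : ℝ)..1, ((p + 3) / 2 + (s - (p + 3) / 2) * y) := by
    refine intervalIntegral.integral_congr fun y hy => ?_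
    rw [uIcc_of_le (by norm_num), mem_Icc] at hy
    have hmax : (t - 2) * y - 1 ≤ (p + 1 - s) * y - 1 := by nlinarith
    simp only [rightEdge, leftEdge, max_eq_left hmax]
    ring
  rw [← intervalIntegral.integral_add_adjacent_intervals (hcont.intervalIntegrable _ 0)
    (hcont.intervalIntegrable 0 _), hneg, hpos, integral_const_add_mul, integral_const_add_mul]
  ring

theorem volume_Qregion {p s t : ℝ} (hs : 0 ≤ s) (ht : 0 ≤ t) (hst : s + t ≤ p + 3) :
    volume (Qregion p s t) = ENNReal.ofReal ((p + 3 + s + t) / 2) := by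
  rw [← measure_interior_of_null_frontier ((convex_Qregion p s t).addHaar_frontier volume),
    interior_Qregion,
    volume_setOf_mem_Ioo_lt_lt (continuous_leftEdge p s t) (continuous_rightEdge p)
      (by norm_num) ?_, integral_rightEdge_sub_leftEdge hst]
  rintro y ⟨hy₁, hy₂⟩
  simp only [leftEdge, rightEdge, max_le_iff]
  constructor <;> nlinarith

theorem Int.ncard_Icc (a b : ℤ) : (Icc a b).ncard = (b + 1 - a).toNat := by
  rw [← Finset.coe_Icc, ncard_coe_finset, Int.card_Icc]

theorem ncard_inter_latticePts (S : Set (ℝ × ℝ)) :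
    (S ∩ latticePts).ncard = {q : ℤ × ℤ | ((q.1 : ℝ), (q.2 : ℝ)) ∈ S}.ncard := by
  have hinj : Function.Injective fun q : ℤ × ℤ => ((q.1 : ℝ), (q.2 : ℝ)) := by
    rintro ⟨a, b⟩ ⟨c, d⟩ h
    simpa using h
  rw [← ncard_image_of_injective _ hinj]
  congr 1
  ext z
  constructor
  · rintro ⟨hz, m, n, rfl⟩
    exact ⟨(m, n), hz, rfl⟩
  · rintro ⟨q, hq, rfl⟩
    exact ⟨hq, q.1, q.2, rfl⟩

theorem intCast_mem_Qregion_iff {p s t m n : ℤ} (hst : s + t ≤ p + 3) :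
    ((m : ℝ), (n : ℝ)) ∈ Qregion p s t ↔ (n = 1 ∧ p - s ≤ m ∧ m ≤ p) ∨
      (n = 0 ∧ -1 ≤ m ∧ 2 * m ≤ p + 1) ∨ (n = -1 ∧ 1 - t ≤ m ∧ m ≤ 1) := by
  simp only [Qregion, leftEdge, rightEdge, mem_ofPred_eq, mem_Icc, max_le_iff,
    le_div_iff₀ (two_pos : (0 : ℝ) < 2)]
  norm_cast
  simp only [Int.reduceNegSucc]
  constructor
  · rintro ⟨⟨h₁, h₂⟩, ⟨h₃, h₄⟩, h₅⟩
    interval_cases n <;> omega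
  · rintro (⟨rfl, h₁, h₂⟩ | ⟨rfl, h₁, h₂⟩ | ⟨rfl, h₁, h₂⟩) <;> omega

theorem intCast_mem_interior_Qregion_iff {p s t m n : ℤ} :
    ((m : ℝ), (n : ℝ)) ∈ interior (Qregion p s t) ↔ n = 0 ∧ 0 ≤ m ∧ 2 * m ≤ p := by
  simp only [interior_Qregion, mem_ofPred_eq, mem_Ioo, leftEdge, rightEdge, max_lt_iff,
    lt_div_iff₀ (two_pos : (0 : ℝ) < 2)]
  norm_cast
  constructor
  · intro h
    obtain rfl : n = 0 := by omega
    omega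
  · rintro ⟨rfl, h₁, h₂⟩
    omega

theorem ncard_interior_Qregion_inter_latticePts {p : ℤ} (hp : -2 ≤ p) (s t : ℤ) :
    ((interior (Qregion p s t) ∩ latticePts).ncard : ℤ) = p / 2 + 1 := by
  have hpts : {q : ℤ × ℤ | ((q.1 : ℝ), (q.2 : ℝ)) ∈ interior (Qregion p s t)} =
      Icc 0 (p / 2) ×ˢ {0} := by
    ext ⟨m, n⟩
    simp only [mem_ofPred_eq, intCast_mem_interior_Qregion_iff, mem_prod, mem_Icc,
      mem_singleton_iff]
    omega
  rw [ncard_inter_latticePts, hpts, ncard_prod, ncard_singleton, mul_one, Int.ncard_Icc,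
    Int.toNat_of_nonneg (by omega)]
  ring

theorem ncard_setOf_eq_neg_one_or_two_mul_eq {p : ℤ} (hp : p ≠ -3) :
    ({m : ℤ | m = -1 ∨ 2 * m = p + 1}.ncard : ℤ) = 1 + p % 2 := by
  rcases Int.emod_two_eq_zero_or_one p with h | h
  · have : {m : ℤ | m = -1 ∨ 2 * m = p + 1} = {-1} := by
      ext m
      simp only [mem_ofPred_eq, mem_singleton_iff]
      omega
    rw [this, ncard_singleton, h]
    rfl
  · have : {m : ℤ | m = -1 ∨ 2 * m = p + 1} = {-1, (p + 1) / 2} := by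
      ext m
      simp only [mem_ofPred_eq, mem_insert_iff, mem_singleton_iff]
      omega
    rw [this, ncard_pair (by omega), h]
    rfl

theorem ncard_frontier_Qregion_inter_latticePts {p s t : ℤ} (hs : 0 ≤ s) (ht : 0 ≤ t)
    (hst : s + t < p + 3) :
    ((frontier (Qregion p s t) ∩ latticePts).ncard : ℤ) = s + t + 3 + p % 2 := by
  set top := Icc (p - s) p ×ˢ ({1} : Set ℤ)
  set middle := {m : ℤ | m = -1 ∨ 2 * m = p + 1} ×ˢ ({0} : Set ℤ)
  set bottom := Icc (1 - t) 1 ×ˢ ({-1} : Set ℤ)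
  have hpts : {q : ℤ × ℤ | ((q.1 : ℝ), (q.2 : ℝ)) ∈ frontier (Qregion p s t)} =
      top ∪ middle ∪ bottom := by
    ext ⟨m, n⟩
    simp only [(isClosed_Qregion _ _ _).frontier_eq, mem_ofPred_eq, mem_sdiff,
      intCast_mem_Qregion_iff hst.le, intCast_mem_interior_Qregion_iff, top, middle, bottom,
      mem_union, mem_prod, mem_Icc, mem_singleton_iff]
    omega
  have hmiddle : middle.Finite := by
    refine .prod ((toFinite ({-1, (p + 1) / 2} : Set ℤ)).subset fun m hm => ?_)
      (finite_singleton _)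
    simp only [mem_ofPred_eq] at hm
    simp only [mem_insert_iff, mem_singleton_iff]
    omega
  have hdisj {a b : ℤ} (hab : a ≠ b) (A B : Set ℤ) : Disjoint (A ×ˢ {a}) (B ×ˢ {b}) :=
    disjoint_prod.2 (Or.inr (disjoint_singleton.2 hab))
  rw [ncard_inter_latticePts, hpts,
    ncard_union_eq (disjoint_union_left.2 ⟨hdisj (by norm_num) _ _, hdisj (by norm_num) _ _⟩)
      ((toFinite top).union hmiddle),
    ncard_union_eq (hdisj (by norm_num) _ _) (toFinite top) hmiddle]
  simp only [ncard_prod, ncard_singleton, mul_one, Int.ncard_Icc]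
  push_cast
  rw [ncard_setOf_eq_neg_one_or_two_mul_eq (by omega), Int.toNat_of_nonneg (by omega),
    Int.toNat_of_nonneg (by omega)]
  ring

theorem exists_Qpoly_eq_Qregion {p : ℤ} (hp : 1 ≤ p) {k : ℕ} (hk : k ∈ ({1, 2, 3} : Set ℕ)) :
    ∃ s t : ℤ, 0 ≤ s ∧ 0 ≤ t ∧ (k : ℤ) = 1 + s + t ∧ Qpoly p k = Qregion p s t := by
  have hP : (1 : ℝ) ≤ p := by exact_mod_cast hp
  rcases hk with rfl | rfl | rfl
  · refine ⟨0, 0, le_rfl, le_rfl, rfl, ?_⟩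
    rw [← convexHull_eq_Qregion (by norm_num) (by norm_num) (by push_cast; linarith)]
    simp only [Qpoly, ↓reduceIte, Qpoly1, Int.cast_zero, sub_zero]
    congr 1
    ext z
    simp only [mem_insert_iff, mem_singleton_iff]
    tauto
  · refine ⟨1, 0, zero_le_one, le_rfl, rfl, ?_⟩
    rw [← convexHull_eq_Qregion (by norm_num) (by norm_num) (by push_cast; linarith)]
    simp only [Qpoly, ↓reduceIte, OfNat.ofNat_ne_one, Qpoly2, Int.cast_zero, Int.cast_one,
      sub_zero]
    congr 1
    ext z
    simp only [mem_insert_iff, mem_singleton_iff]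
    tauto
  · refine ⟨1, 1, zero_le_one, zero_le_one, rfl, ?_⟩
    rw [← convexHull_eq_Qregion (by norm_num) (by norm_num) (by push_cast; linarith)]
    simp only [Qpoly, ↓reduceIte, OfNat.ofNat_ne_one, Qpoly3, Int.cast_one, sub_self]
    rfl

/-- for p ≥ 1 and k ∈ {1,2,3}: area(Q_p^[k]) = (p+k)/2 + 1; the number of
lattice points on ∂Q_p^[k] is k+2 for p even and k+3 for p odd; the number of interior
lattice points is p/2 + 1 for p even and (p−1)/2 + 1 for p odd. -/
theorem stmt8 (p : ℤ) (hp : 1 ≤ p) (k : ℕ) (hk : k ∈ ({1, 2, 3} : Set ℕ)) :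
    MeasureTheory.volume (Qpoly p k) = ENNReal.ofReal (((p : ℝ) + (k : ℝ)) / 2 + 1) ∧
    (Even p → (frontier (Qpoly p k) ∩ latticePts).ncard = k + 2) ∧
    (Odd p → (frontier (Qpoly p k) ∩ latticePts).ncard = k + 3) ∧
    (Even p → ((interior (Qpoly p k) ∩ latticePts).ncard : ℚ) = (p : ℚ) / 2 + 1) ∧
    (Odd p → ((interior (Qpoly p k) ∩ latticePts).ncard : ℚ) = ((p : ℚ) - 1) / 2 + 1) := by
  obtain ⟨s, t, hs, ht, hkst, hQ⟩ := exists_Qpoly_eq_Qregion hp hk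
  have hk3 : k ≤ 3 := by rcases hk with rfl | rfl | rfl <;> norm_num
  have hfrontier := ncard_frontier_Qregion_inter_latticePts (p := p) hs ht (by omega)
  have hinterior := ncard_interior_Qregion_inter_latticePts (p := p) (by omega) s t
  rw [hQ]
  refine ⟨?_, fun hev => ?_, fun hodd => ?_, fun hev => ?_, fun hodd => ?_⟩
  · have hkR : (k : ℝ) = 1 + s + t := by exact_mod_cast hkst
    rw [volume_Qregion (by exact_mod_cast hs) (by exact_mod_cast ht)
      (by exact_mod_cast (by omega : s + t ≤ p + 3)), hkR]
    congr 1
    ring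
  · have := Int.even_iff.1 hev
    omega
  · have := Int.odd_iff.1 hodd
    omega
  · obtain ⟨q, rfl⟩ := hev
    rw [← Int.cast_natCast, hinterior, show (q + q) / 2 = q by omega]
    push_cast
    ring
  · obtain ⟨q, rfl⟩ := hodd
    rw [← Int.cast_natCast, hinterior, show (2 * q + 1) / 2 = q by omega]
    push_cast
    ring
end

section
/- For every integer p ≥ 1 and every k ∈ {1,2,3}, the smallest positive integer κ such that every vertex (extreme point) of the dilated polar polygon κ·Q̊_p^[k] lies in ℤ² equals (p+1)/2 if p is odd and p+1 if p is even. -/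
/-!
Each polar `Q̊_p^[k]` is an explicit polygon whose vertices are lattice points together with the
apex `c = (-2/(p+1), (p-1)/(p+1))` dual to the edge `[(1,-1), (p,1)]` of `Q_p^[k]`; the polar lies
in that polygon because it lies in each triangle of the fan triangulation from `c` that the
diagonals through `c` select. Hence the vertices of `κ • Q̊_p^[k]` are integral as soon as `κ • c`
is, that is, as soon as `p + 1 ∣ 2κ`. Conversely `c` is the unique minimiser of `y₁` on the polar,
so `κ • c` is always a vertex, and the least positive `κ` with `p + 1 ∣ 2κ` is `ℓ_p`.
-/

open Pointwise

/-- The polar polygon Q̊ := {y : ⟨y,x⟩ ≥ −1 for all x ∈ Q}. -/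
def polar2 (Q : Set (ℝ × ℝ)) : Set (ℝ × ℝ) :=
  {y | ∀ x ∈ Q, -1 ≤ y.1 * x.1 + y.2 * x.2}

/-- ℓ_p := (p+1)/2 if p is odd, p+1 if p is even. -/
def ellp (p : ℤ) : ℤ := if Odd p then (p + 1) / 2 else p + 1

def orient (A B C : ℝ × ℝ) : ℝ := (B.1 - A.1) * (C.2 - A.2) - (C.1 - A.1) * (B.2 - A.2)

lemma mem_convexHull_of_orient {s : Set (ℝ × ℝ)} {A B C y : ℝ × ℝ} (hAs : A ∈ s) (hBs : B ∈ s)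
    (hCs : C ∈ s) (hABC : 0 < orient A B C) (hA : 0 ≤ orient y B C) (hB : 0 ≤ orient A y C)
    (hC : 0 ≤ orient A B y) : y ∈ convexHull ℝ s := by
  have hsum : orient y B C + orient A y C + orient A B y = orient A B C := by
    simp only [orient]; ring
  have hy : y = ∑ i, (![orient y B C, orient A y C, orient A B y] i / orient A B C) •
      ![A, B, C] i := by
    simp only [Fin.sum_univ_three, Matrix.cons_val]
    ext <;> simp only [Prod.fst_add, Prod.snd_add, Prod.smul_fst, Prod.smul_snd, smul_eq_mul] <;>
      field_simp <;> simp only [orient] <;> ring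
  rw [hy]
  refine (convex_convexHull ℝ s).sum_mem (fun i _ => ?_) ?_ (fun i _ => ?_)
  · fin_cases i <;> simp <;> positivity
  · simp [Fin.sum_univ_three, ← add_div, hsum, hABC.ne']
  · fin_cases i <;> apply subset_convexHull <;> assumption

lemma smul_mem_extremePoints_smul {E : Type*} [AddCommGroup E] [Module ℝ E] {s : Set E} {x : E}
    (hx : x ∈ Set.extremePoints ℝ s) {a : ℝ} (ha : a ≠ 0) :
    a • x ∈ Set.extremePoints ℝ (a • s) := by
  rw [← Set.image_smul]
  exact image_extremePoints (LinearEquiv.smulOfNeZero ℝ E a ha) s ▸ ⟨x, hx, rfl⟩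

lemma convex_setOf_neg_one_le (v : ℝ × ℝ) :
    Convex ℝ {x : ℝ × ℝ | -1 ≤ v.1 * x.1 + v.2 * x.2} :=
  convex_halfSpace_ge ⟨fun x y => by simp only [Prod.fst_add, Prod.snd_add]; ring,
    fun c x => by simp only [Prod.smul_fst, Prod.smul_snd, smul_eq_mul]; ring⟩ (-1)

lemma convex_polar2 (Q : Set (ℝ × ℝ)) : Convex ℝ (polar2 Q) := by
  have : polar2 Q = ⋂ x ∈ Q, {y : ℝ × ℝ | -1 ≤ x.1 * y.1 + x.2 * y.2} := by
    ext y; simp [polar2, mul_comm]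
  rw [this]
  exact convex_iInter₂ fun x _ => convex_setOf_neg_one_le x

lemma polar2_convexHull (S : Set (ℝ × ℝ)) : polar2 (convexHull ℝ S) = polar2 S :=
  Set.Subset.antisymm (fun _ hy x hx => hy x (subset_convexHull ℝ S hx)) fun y hy _ hx =>
    convexHull_min (fun x hx => hy x hx) (convex_setOf_neg_one_le y) hx

noncomputable def polarApex (q : ℝ) : ℝ × ℝ := (-2 / (q + 1), (q - 1) / (q + 1))

lemma polar2_triangle (q : ℝ) (hq : -1 < q) :
    polar2 (convexHull ℝ {(1, -1), (q, 1), (-1, 0)}) =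
      convexHull ℝ {polarApex q, (1, -q - 1), (1, 2)} := by
  have hq1 : 0 < q + 1 := by linarith
  rw [polar2_convexHull]
  apply Set.Subset.antisymm
  · intro y hy
    simp only [polar2, Set.mem_ofPred_eq, Set.forall_mem_insert, forall_eq,
      Set.mem_singleton_iff] at hy
    obtain ⟨h1, h2, h3⟩ := hy
    refine mem_convexHull_of_orient (A := polarApex q) (B := (1, -q - 1)) (C := (1, 2))
      (by simp) (by simp) (by simp) ?_ ?_ ?_ ?_ <;>
      simp only [orient, polarApex] <;> field_simp <;> nlinarith
  · refine convexHull_min ?_ (convex_polar2 _)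
    simp only [polar2, Set.insert_subset_iff, Set.singleton_subset_iff, Set.mem_ofPred_eq,
      Set.forall_mem_insert, forall_eq, Set.mem_singleton_iff, polarApex]
    refine ⟨⟨?_, ?_, ?_⟩, ⟨?_, ?_, ?_⟩, ⟨?_, ?_, ?_⟩⟩ <;> field_simp <;> nlinarith

lemma polar2_quadrilateral (q : ℝ) (hq : 0 < q) :
    polar2 (convexHull ℝ {(1, -1), (q, 1), (q - 1, 1), (-1, 0)}) =
      convexHull ℝ {polarApex q, (0, -1), (1, -q), (1, 2)} := by
  have hq1 : 0 < q + 1 := by linarith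
  rw [polar2_convexHull]
  apply Set.Subset.antisymm
  · intro y hy
    simp only [polar2, Set.mem_ofPred_eq, Set.forall_mem_insert, forall_eq,
      Set.mem_singleton_iff] at hy
    obtain ⟨h1, h2, h3, h4⟩ := hy
    rcases le_total 0 (orient (polarApex q) (1, -q) y) with h | h
    · refine mem_convexHull_of_orient (A := polarApex q) (B := (1, -q)) (C := (1, 2))
        (by simp) (by simp) (by simp) ?_ ?_ ?_ h <;>
        simp only [orient, polarApex] at h ⊢ <;> field_simp at h ⊢ <;> nlinarith
    · refine mem_convexHull_of_orient (A := polarApex q) (B := (0, -1)) (C := (1, -q))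
        (by simp) (by simp) (by simp) ?_ ?_ ?_ ?_ <;>
        simp only [orient, polarApex] at h ⊢ <;> field_simp at h ⊢ <;> nlinarith
  · refine convexHull_min ?_ (convex_polar2 _)
    simp only [polar2, Set.insert_subset_iff, Set.singleton_subset_iff, Set.mem_ofPred_eq,
      Set.forall_mem_insert, forall_eq, Set.mem_singleton_iff, polarApex]
    refine ⟨⟨?_, ?_, ?_, ?_⟩, ⟨?_, ?_, ?_, ?_⟩, ⟨?_, ?_, ?_, ?_⟩, ⟨?_, ?_, ?_, ?_⟩⟩ <;>
      field_simp <;> nlinarith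

lemma polar2_pentagon (q : ℝ) (hq : 0 < q) :
    polar2 (convexHull ℝ {(1, -1), (q, 1), (q - 1, 1), (-1, 0), (0, -1)}) =
      convexHull ℝ {polarApex q, (0, -1), (1, -q), (1, 1), (0, 1)} := by
  have hq1 : 0 < q + 1 := by linarith
  rw [polar2_convexHull]
  apply Set.Subset.antisymm
  · intro y hy
    simp only [polar2, Set.mem_ofPred_eq, Set.forall_mem_insert, forall_eq,
      Set.mem_singleton_iff] at hy
    obtain ⟨h1, h2, h3, h4, h5⟩ := hy
    rcases le_total 0 (orient (polarApex q) (1, -q) y) with h | h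
    · rcases le_total 0 (orient (polarApex q) (1, 1) y) with h' | h'
      · refine mem_convexHull_of_orient (A := polarApex q) (B := (1, 1)) (C := (0, 1))
          (by simp) (by simp) (by simp) ?_ ?_ ?_ h' <;>
          simp only [orient, polarApex] at h h' ⊢ <;> field_simp at h h' ⊢ <;> nlinarith
      · refine mem_convexHull_of_orient (A := polarApex q) (B := (1, -q)) (C := (1, 1))
          (by simp) (by simp) (by simp) ?_ ?_ ?_ h <;>
          simp only [orient, polarApex] at h h' ⊢ <;> field_simp at h h' ⊢ <;> nlinarith
    · refine mem_convexHull_of_orient (A := polarApex q) (B := (0, -1)) (C := (1, -q))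
        (by simp) (by simp) (by simp) ?_ ?_ ?_ ?_ <;>
        simp only [orient, polarApex] at h ⊢ <;> field_simp at h ⊢ <;> nlinarith
  · refine convexHull_min ?_ (convex_polar2 _)
    simp only [polar2, Set.insert_subset_iff, Set.singleton_subset_iff, Set.mem_ofPred_eq,
      Set.forall_mem_insert, forall_eq, Set.mem_singleton_iff, polarApex]
    refine ⟨⟨?_, ?_, ?_, ?_, ?_⟩, ⟨?_, ?_, ?_, ?_, ?_⟩, ⟨?_, ?_, ?_, ?_, ?_⟩,
      ⟨?_, ?_, ?_, ?_, ?_⟩, ⟨?_, ?_, ?_, ?_, ?_⟩⟩ <;> field_simp <;> nlinarith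

lemma polarApex_mem_exposedPoints {Q : Set (ℝ × ℝ)} {q : ℝ} (hq : -1 < q)
    (h₁ : (1, -1) ∈ Q) (h₂ : (q, 1) ∈ Q) (hmem : polarApex q ∈ polar2 Q) :
    polarApex q ∈ Set.exposedPoints ℝ (polar2 Q) := by
  have hq1 : 0 < q + 1 := by linarith
  refine ⟨hmem, -ContinuousLinearMap.fst ℝ ℝ ℝ, fun y hy => ?_⟩
  have hy₁ := hy _ h₁
  have hy₂ := hy _ h₂
  simp only [neg_apply, ContinuousLinearMap.coe_fst', polarApex, neg_le_neg_iff] at hy₁ hy₂ ⊢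
  refine ⟨by rw [div_le_iff₀ hq1]; linarith, fun hle => ?_⟩
  rw [le_div_iff₀ hq1] at hle
  ext <;> field_simp <;> nlinarith

lemma intCast_smul_mem_latticePts (κ : ℤ) {z : ℝ × ℝ} (hz : z ∈ latticePts) :
    (κ : ℝ) • z ∈ latticePts := by
  obtain ⟨m, n, rfl⟩ := hz
  exact ⟨κ * m, κ * n, by simp⟩

lemma smul_polarApex_mem_latticePts_iff {p : ℤ} (hp : p ≠ -1) (κ : ℤ) :
    (κ : ℝ) • polarApex p ∈ latticePts ↔ p + 1 ∣ 2 * κ := by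
  have hp' : (p : ℝ) + 1 ≠ 0 := by exact_mod_cast fun h => hp (by linarith)
  constructor
  · rintro ⟨m, _, hm⟩
    have hm₁ := congrArg Prod.fst hm
    simp only [polarApex, Prod.smul_fst, smul_eq_mul] at hm₁
    field_simp at hm₁
    exact ⟨-m, by exact_mod_cast (by linarith : (2 * κ : ℝ) = (p + 1) * -m)⟩
  · rintro ⟨t, ht⟩
    have ht' : (2 * κ : ℝ) = (p + 1) * t := by exact_mod_cast ht
    refine ⟨-t, κ - t, ?_⟩
    ext <;> simp only [polarApex, Prod.smul_fst, Prod.smul_snd, smul_eq_mul] <;> push_cast <;>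
      field_simp <;> linarith

lemma dvd_two_mul_iff_ellp_dvd (p κ : ℤ) : p + 1 ∣ 2 * κ ↔ ellp p ∣ κ := by
  unfold ellp
  split_ifs with hp
  · obtain ⟨m, rfl⟩ := hp
    rw [show 2 * m + 1 + 1 = 2 * (m + 1) by ring, Int.mul_ediv_cancel_left _ two_ne_zero]
    exact mul_dvd_mul_iff_left two_ne_zero
  · obtain ⟨m, rfl⟩ := Int.not_odd_iff_even.1 hp
    have : IsCoprime (m + m + 1) 2 := ⟨1, -m, by ring⟩
    exact ⟨this.dvd_of_dvd_mul_left, fun h => h.mul_left 2⟩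

lemma ellp_pos {p : ℤ} (hp : 0 ≤ p) : 0 < ellp p := by
  unfold ellp
  split_ifs with ho
  · obtain ⟨m, rfl⟩ := ho
    omega
  · omega

lemma isLeast_ellp_of_polar2_eq_convexHull {p : ℤ} (hp : 0 ≤ p) {Q V : Set (ℝ × ℝ)}
    (hQV : polar2 Q = convexHull ℝ V) (h₁ : (1, -1) ∈ Q) (h₂ : ((p : ℝ), 1) ∈ Q)
    (hapex : polarApex p ∈ V) (hV : V ⊆ insert (polarApex p) latticePts) :
    IsLeast {κ : ℤ | 0 < κ ∧
        ∀ z ∈ Set.extremePoints ℝ ((κ : ℝ) • polar2 Q), z ∈ latticePts} (ellp p) := by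
  have hp₁ : p ≠ -1 := by omega
  refine ⟨⟨ellp_pos hp, fun z hz => ?_⟩, fun κ ⟨hκ, hlat⟩ => ?_⟩
  · rw [hQV, ← convexHull_smul] at hz
    obtain ⟨v, hv, rfl⟩ := extremePoints_convexHull_subset hz
    rcases hV hv with rfl | hv
    · exact (smul_polarApex_mem_latticePts_iff hp₁ _).2
        ((dvd_two_mul_iff_ellp_dvd p _).2 dvd_rfl)
    · exact intCast_smul_mem_latticePts _ hv
  · have hext : polarApex p ∈ Set.extremePoints ℝ (polar2 Q) :=
      exposedPoints_subset_extremePoints <| polarApex_mem_exposedPoints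
        (by exact_mod_cast (by omega : (-1 : ℤ) < p)) h₁ h₂ (hQV ▸ subset_convexHull ℝ V hapex)
    have := hlat _ (smul_mem_extremePoints_smul hext (by exact_mod_cast hκ.ne'))
    exact Int.le_of_dvd hκ
      ((dvd_two_mul_iff_ellp_dvd p κ).1 ((smul_polarApex_mem_latticePts_iff hp₁ κ).1 this))

/-- the smallest positive integer κ such that every vertex of κ·Q̊_p^[k] is a
lattice point equals (p+1)/2 for p odd and p+1 for p even. -/
theorem stmt9 (p : ℤ) (hp : 1 ≤ p) (k : ℕ) (hk : k ∈ ({1, 2, 3} : Set ℕ)) :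
    IsLeast {κ : ℤ | 0 < κ ∧
        ∀ z ∈ Set.extremePoints ℝ ((κ : ℝ) • polar2 (Qpoly p k)), z ∈ latticePts}
      (if Odd p then (p + 1) / 2 else p + 1) := by
  have hq : (0 : ℝ) < p := by exact_mod_cast hp
  rcases hk with rfl | rfl | rfl
  · refine isLeast_ellp_of_polar2_eq_convexHull (by omega) (polar2_triangle p (by linarith))
      (subset_convexHull ℝ _ (by simp)) (subset_convexHull ℝ _ (by simp)) (by simp)
      (Set.insert_subset_insert ?_)
    simp only [Set.insert_subset_iff, Set.singleton_subset_iff]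
    exact ⟨⟨1, -p - 1, by push_cast; ring_nf⟩, ⟨1, 2, by norm_num⟩⟩
  · refine isLeast_ellp_of_polar2_eq_convexHull (by omega) (polar2_quadrilateral p hq)
      (subset_convexHull ℝ _ (by simp)) (subset_convexHull ℝ _ (by simp)) (by simp)
      (Set.insert_subset_insert ?_)
    simp only [Set.insert_subset_iff, Set.singleton_subset_iff]
    exact ⟨⟨0, -1, by norm_num⟩, ⟨1, -p, by push_cast; ring_nf⟩, ⟨1, 2, by norm_num⟩⟩
  · refine isLeast_ellp_of_polar2_eq_convexHull (by omega) (polar2_pentagon p hq)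
      (subset_convexHull ℝ _ (by simp)) (subset_convexHull ℝ _ (by simp)) (by simp)
      (Set.insert_subset_insert ?_)
    simp only [Set.insert_subset_iff, Set.singleton_subset_iff]
    exact ⟨⟨0, -1, by norm_num⟩, ⟨1, -p, by push_cast; ring_nf⟩, ⟨1, 1, by norm_num⟩,
      ⟨0, 1, by norm_num⟩⟩
end

section
/- For every integer p ≥ 1 and k ∈ {1,2,3}, the number of lattice points of ℤ² on the boundary ∂(ℓ_p·Q̊_p^[k]) equals: for k = 1, (p+3)²/2 if p is odd and (p+3)² if p is even; for k = 2, (p²+5p+8)/2 if p is odd and p²+5p+8 if p is even; for k = 3, (p²+4p+7)/2 if p is odd and p²+4p+7 if p is even. -/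
open Pointwise

/-!
The vertices `(-1,0)`, `(1,-1)`, `(0,-1)`, `(p,1)`, `(p-1,1)` of `Q_p^[k]` turn `ℓ • Q̊_p^[k]` into
the region `{x ≤ ℓ, g x ≤ y ≤ h x}` between a convex lower and a concave upper piecewise linear
function, both integral on integers. With `2ℓ = c (p+1)` the two graphs meet at `x = -c`, so
the lattice points of the boundary are the whole vertical edge over `x = ℓ`, of length
`h ℓ - g ℓ = (p+4-k) ℓ`, plus two points over each of `-c < m < ℓ` and one over `-c`:
`(p+4-k) ℓ + 2 (ℓ + c)` in total, which is the claimed count for `c = 1` (`p` odd) and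
`c = 2` (`p` even).
-/

open Set Filter Topology

lemma polar2_convexHull_s11 (S : Set (ℝ × ℝ)) :
    polar2 (convexHull ℝ S) = {y | ∀ x ∈ S, -1 ≤ y.1 * x.1 + y.2 * x.2} := by
  refine Subset.antisymm (fun y hy x hx => hy x (subset_convexHull ℝ S hx)) fun y hy x hx => ?_
  have hlin : IsLinearMap ℝ (fun x : ℝ × ℝ => y.1 * x.1 + y.2 * x.2) :=
    ⟨fun a b => by simp only [Prod.fst_add, Prod.snd_add]; ring,
     fun c a => by simp only [Prod.smul_fst, Prod.smul_snd, smul_eq_mul]; ring⟩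
  exact convexHull_min hy (convex_halfSpace_ge hlin (-1)) hx

lemma mem_smul_polar2_convexHull {ℓ : ℝ} (hℓ : 0 < ℓ) (S : Set (ℝ × ℝ)) (y : ℝ × ℝ) :
    y ∈ ℓ • polar2 (convexHull ℝ S) ↔ ∀ x ∈ S, -ℓ ≤ y.1 * x.1 + y.2 * x.2 := by
  rw [mem_smul_set_iff_inv_smul_mem₀ hℓ.ne', polar2_convexHull_s11]
  refine forall₂_congr fun x _ => ?_
  rw [Prod.smul_fst, Prod.smul_snd, smul_eq_mul, smul_eq_mul, mul_assoc, mul_assoc, ← mul_add,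
    le_inv_mul_iff₀ hℓ, mul_neg_one]

section LeftRegion

variable {α : Type*} [LinearOrder α]

def leftRegion (ℓ : α) (g h : α → α) : Set (α × α) :=
  {q | q.1 ≤ ℓ ∧ g q.1 ≤ q.2 ∧ q.2 ≤ h q.1}

def leftRegionBoundary (ℓ : α) (g h : α → α) : Set (α × α) :=
  {q | q ∈ leftRegion ℓ g h ∧ (q.1 = ℓ ∨ q.2 = g q.1 ∨ q.2 = h q.1)}

end LeftRegion

lemma exists_pos_add_smul_mem_of_mem_interior {E : Type*} [TopologicalSpace E] [AddCommGroup E]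
    [Module ℝ E] [ContinuousAdd E] [ContinuousSMul ℝ E] {s : Set E} {x : E}
    (hx : x ∈ interior s) (v : E) : ∃ t : ℝ, 0 < t ∧ x + t • v ∈ s := by
  have hcont : Tendsto (fun t : ℝ => x + t • v) (𝓝 0) (𝓝 x) :=
    Continuous.tendsto' (by fun_prop) 0 x (by simp)
  obtain ⟨t, hts, ht⟩ := ((hcont.eventually (mem_interior_iff_mem_nhds.1 hx)).filter_mono
    nhdsWithin_le_nhds |>.and (self_mem_nhdsWithin (s := Ioi (0 : ℝ)))).exists
  exact ⟨t, ht, hts⟩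

section Real

variable {ℓ : ℝ} {g h : ℝ → ℝ}

lemma isClosed_leftRegion (hg : Continuous g) (hh : Continuous h) :
    IsClosed (leftRegion ℓ g h) :=
  (isClosed_le continuous_fst continuous_const).inter
    ((isClosed_le (hg.comp continuous_fst) continuous_snd).inter
      (isClosed_le continuous_snd (hh.comp continuous_fst)))

lemma interior_leftRegion (hg : Continuous g) (hh : Continuous h) :
    interior (leftRegion ℓ g h) = {q | q.1 < ℓ ∧ g q.1 < q.2 ∧ q.2 < h q.1} := by
  refine Subset.antisymm (fun q hq => ?_) (interior_maximal
    (fun q hq => ⟨hq.1.le, hq.2.1.le, hq.2.2.le⟩)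
    ((isOpen_lt continuous_fst continuous_const).inter
      ((isOpen_lt (hg.comp continuous_fst) continuous_snd).inter
        (isOpen_lt continuous_snd (hh.comp continuous_fst)))))
  obtain ⟨t₁, ht₁, hq₁, -⟩ := exists_pos_add_smul_mem_of_mem_interior hq (1, 0)
  obtain ⟨t₂, ht₂, -, hq₂, -⟩ := exists_pos_add_smul_mem_of_mem_interior hq (0, -1)
  obtain ⟨t₃, ht₃, -, -, hq₃⟩ := exists_pos_add_smul_mem_of_mem_interior hq (0, 1)
  simp only [Prod.fst_add, Prod.snd_add, Prod.smul_mk, smul_eq_mul, mul_one, mul_zero,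
    add_zero, mul_neg] at hq₁ hq₂ hq₃
  exact ⟨by linarith, by linarith, by linarith⟩

lemma frontier_leftRegion (hg : Continuous g) (hh : Continuous h) :
    frontier (leftRegion ℓ g h) = leftRegionBoundary ℓ g h := by
  rw [(isClosed_leftRegion hg hh).frontier_eq, interior_leftRegion hg hh]
  ext q
  simp only [leftRegionBoundary, leftRegion, Set.mem_sdiff, mem_ofPred_eq]
  constructor
  · rintro ⟨hq, hint⟩
    refine ⟨hq, ?_⟩
    by_contra! hne
    exact hint ⟨lt_of_le_of_ne hq.1 hne.1, lt_of_le_of_ne hq.2.1 (Ne.symm hne.2.1),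
      lt_of_le_of_ne hq.2.2 hne.2.2⟩
  · rintro ⟨hq, hedge⟩
    refine ⟨hq, fun hint => ?_⟩
    rcases hedge with h₁ | h₂ | h₃
    · exact hint.1.ne h₁
    · exact hint.2.1.ne' h₂
    · exact hint.2.2.ne h₃

end Real

section IntegerCount

variable {ℓ a : ℤ} {g h : ℤ → ℤ}

lemma leftRegionBoundary_int_eq (hgt : ∀ m < a, h m < g m) (ha : g a = h a)
    (hlt : ∀ m, a < m → g m < h m) :
    leftRegionBoundary ℓ g h =
      ↑((Finset.Icc (g ℓ) (h ℓ)).image (fun n => (ℓ, n)) ∪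
        (Finset.Icc a (ℓ - 1)).image (fun m => (m, g m)) ∪
        (Finset.Icc (a + 1) (ℓ - 1)).image (fun m => (m, h m))) := by
  ext ⟨m, n⟩
  simp only [leftRegionBoundary, leftRegion, mem_ofPred_eq, Finset.coe_union, Finset.coe_image,
    Finset.coe_Icc, mem_union, mem_image, mem_Icc, Prod.mk.injEq]
  constructor
  · rintro ⟨⟨hmℓ, hgn, hnh⟩, hedge⟩
    have ham : a ≤ m := not_lt.1 fun hm => (hgt m hm).not_ge (hgn.trans hnh)
    rcases hmℓ.lt_or_eq with hmℓ | rfl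
    · rcases hedge with rfl | rfl | rfl
      · exact absurd rfl hmℓ.ne
      · exact Or.inl (Or.inr ⟨m, ⟨ham, by omega⟩, rfl, rfl⟩)
      · rcases ham.lt_or_eq with ham | rfl
        · exact Or.inr ⟨m, ⟨by omega, by omega⟩, rfl, rfl⟩
        · exact Or.inl (Or.inr ⟨a, ⟨le_rfl, by omega⟩, rfl, ha⟩)
    · exact Or.inl (Or.inl ⟨n, ⟨hgn, hnh⟩, rfl, rfl⟩)
  · rintro ((⟨n, hn, rfl, rfl⟩ | ⟨m, ⟨ham, hmℓ⟩, rfl, rfl⟩) | ⟨m, hm, rfl, rfl⟩)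
    · exact ⟨⟨le_rfl, hn⟩, Or.inl rfl⟩
    · refine ⟨⟨by omega, le_rfl, ?_⟩, Or.inr (Or.inl rfl)⟩
      rcases ham.lt_or_eq with ham | rfl
      exacts [(hlt m ham).le, ha.le]
    · exact ⟨⟨by omega, (hlt m (by omega)).le, le_rfl⟩, Or.inr (Or.inr rfl)⟩

lemma ncard_leftRegionBoundary_int (haℓ : a < ℓ) (hgt : ∀ m < a, h m < g m) (ha : g a = h a)
    (hlt : ∀ m, a < m → g m < h m) :
    ((leftRegionBoundary ℓ g h).ncard : ℤ) = h ℓ - g ℓ + 2 * (ℓ - a) := by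
  have hℓ := (hlt ℓ haℓ).le
  rw [leftRegionBoundary_int_eq hgt ha hlt, ncard_coe_finset,
    Finset.card_union_of_disjoint, Finset.card_union_of_disjoint,
    Finset.card_image_of_injective _ (Prod.mk_right_injective ℓ),
    Finset.card_image_of_injective _ (fun _ _ e => congrArg Prod.fst e),
    Finset.card_image_of_injective _ (fun _ _ e => congrArg Prod.fst e),
    Int.card_Icc, Int.card_Icc, Int.card_Icc]
  · push_cast
    rw [Int.toNat_of_nonneg (by omega), Int.toNat_of_nonneg (by omega),
      Int.toNat_of_nonneg (by omega)]
    ring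
  · simp only [Finset.disjoint_left, Finset.mem_image, Finset.mem_Icc]
    rintro _ ⟨n, -, rfl⟩ ⟨m, hm, e⟩
    simp only [Prod.mk.injEq] at e
    omega
  · simp only [Finset.disjoint_left, Finset.mem_union, Finset.mem_image, Finset.mem_Icc]
    rintro _ (⟨n, -, rfl⟩ | ⟨m, hm, rfl⟩) ⟨m', hm', e⟩ <;> simp only [Prod.mk.injEq] at e
    · omega
    · obtain ⟨rfl, e⟩ := e
      exact (hlt m' (by omega)).ne e.symm

end IntegerCount

lemma leftRegionBoundary_inter_latticePts {ℓ : ℤ} {g h : ℤ → ℤ} {gR hR : ℝ → ℝ}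
    (hg : ∀ m : ℤ, gR m = g m) (hh : ∀ m : ℤ, hR m = h m) :
    leftRegionBoundary (ℓ : ℝ) gR hR ∩ latticePts =
      Prod.map (Int.cast : ℤ → ℝ) Int.cast '' leftRegionBoundary ℓ g h := by
  ext q
  constructor
  · rintro ⟨hq, m, n, rfl⟩
    refine ⟨(m, n), ?_, rfl⟩
    simpa only [leftRegionBoundary, leftRegion, mem_ofPred_eq, hg, hh, Int.cast_le,
      Int.cast_inj] using hq
  · rintro ⟨⟨m, n⟩, hq, rfl⟩
    refine ⟨?_, m, n, rfl⟩
    simpa only [leftRegionBoundary, leftRegion, mem_ofPred_eq, Prod.map_fst, Prod.map_snd, hg, hh,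
      Int.cast_le, Int.cast_inj] using hq

section PolarEdges

variable {R : Type*} [Ring R] [LinearOrder R]

def polarLower (p ℓ : R) (k : ℕ) (x : R) : R :=
  if k = 1 then -ℓ - p * x else max (-ℓ - p * x) (-ℓ - (p - 1) * x)

def polarUpper (ℓ : R) (k : ℕ) (x : R) : R :=
  if k = 3 then min (x + ℓ) ℓ else x + ℓ

lemma le_polarLower (p ℓ : R) (k : ℕ) (x : R) : -ℓ - p * x ≤ polarLower p ℓ k x := by
  unfold polarLower; split_ifs
  exacts [le_rfl, le_max_left _ _]

lemma polarUpper_le (ℓ : R) (k : ℕ) (x : R) : polarUpper ℓ k x ≤ x + ℓ := by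
  unfold polarUpper; split_ifs
  exacts [min_le_left _ _, le_rfl]

lemma Int.cast_polarLower [IsStrictOrderedRing R] (p ℓ : ℤ) (k : ℕ) (m : ℤ) :
    ((polarLower p ℓ k m : ℤ) : R) = polarLower (p : R) ℓ k m := by
  unfold polarLower; split_ifs <;> push_cast <;> rfl

lemma Int.cast_polarUpper [IsStrictOrderedRing R] (ℓ : ℤ) (k : ℕ) (m : ℤ) :
    ((polarUpper ℓ k m : ℤ) : R) = polarUpper (ℓ : R) k m := by
  unfold polarUpper; split_ifs <;> push_cast <;> rfl

end PolarEdges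

lemma continuous_polarLower (p ℓ : ℝ) (k : ℕ) : Continuous (polarLower p ℓ k) := by
  unfold polarLower; split_ifs <;> fun_prop

lemma continuous_polarUpper (ℓ : ℝ) (k : ℕ) : Continuous (polarUpper ℓ k) := by
  unfold polarUpper; split_ifs <;> fun_prop

lemma smul_polar2_Qpoly (p : ℤ) {ℓ : ℝ} (hℓ : 0 < ℓ) {k : ℕ} (hk : k ∈ ({1, 2, 3} : Set ℕ)) :
    ℓ • polar2 (Qpoly p k) = leftRegion ℓ (polarLower (p : ℝ) ℓ k) (polarUpper ℓ k) := by
  ext y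
  obtain rfl | rfl | rfl : k = 1 ∨ k = 2 ∨ k = 3 := by simpa using hk
  all_goals
    simp only [Qpoly, Qpoly1, Qpoly2, Qpoly3, polarLower, polarUpper, leftRegion,
      mem_smul_polar2_convexHull hℓ, mem_insert_iff, mem_singleton_iff, forall_eq_or_imp,
      forall_eq, mem_ofPred_eq, max_le_iff, le_min_iff, ↓reduceIte, Nat.reduceEqDiff]
    constructor <;> intro h <;> casesm* _ ∧ _ <;> constructorm* _ ∧ _ <;> linarith

section IntegerEdges

variable {p c ℓ : ℤ} {k : ℕ}

lemma polarUpper_sub_polarLower_self (hℓ : 0 ≤ ℓ) (hk : k ∈ ({1, 2, 3} : Set ℕ)) :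
    polarUpper ℓ k ℓ - polarLower p ℓ k ℓ = (p + 4 - k) * ℓ := by
  obtain rfl | rfl | rfl : k = 1 ∨ k = 2 ∨ k = 3 := by simpa using hk
  all_goals
    simp only [polarLower, polarUpper, ↓reduceIte, Nat.reduceEqDiff]
    push_cast
  · ring
  · rw [max_eq_right (by linarith)]; ring
  · rw [max_eq_right (by linarith), min_eq_right (by linarith)]; ring

lemma polarLower_neg_eq_polarUpper (hc : 0 ≤ c) (h2 : 2 * ℓ = c * (p + 1))
    (hk : k ∈ ({1, 2, 3} : Set ℕ)) : polarLower p ℓ k (-c) = polarUpper ℓ k (-c) := by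
  obtain rfl | rfl | rfl : k = 1 ∨ k = 2 ∨ k = 3 := by simpa using hk
  all_goals simp only [polarLower, polarUpper, ↓reduceIte, Nat.reduceEqDiff]
  · linarith
  · rw [max_eq_left (by linarith)]; linarith
  · rw [max_eq_left (by linarith), min_eq_left (by linarith)]; linarith

lemma polarUpper_lt_polarLower (hp : 0 ≤ p) (h2 : 2 * ℓ = c * (p + 1)) {m : ℤ} (hm : m < -c) :
    polarUpper ℓ k m < polarLower p ℓ k m := by
  have : m + ℓ < -ℓ - p * m := by nlinarith
  linarith [polarUpper_le ℓ k m, le_polarLower p ℓ k m]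

lemma polarLower_lt_polarUpper (hp : 1 ≤ p) (hc : 0 < c) (h2 : 2 * ℓ = c * (p + 1)) {m : ℤ}
    (hm : -c < m) : polarLower p ℓ k m < polarUpper ℓ k m := by
  have h₁ : -ℓ - p * m < m + ℓ := by nlinarith
  have h₂ : -ℓ - (p - 1) * m < m + ℓ := by nlinarith
  have h₃ : -ℓ - p * m < ℓ := by nlinarith
  have h₄ : -ℓ - (p - 1) * m < ℓ := by
    nlinarith [mul_nonneg (sub_nonneg.2 hp) (show 0 ≤ m + c by omega)]
  unfold polarLower polarUpper
  split_ifs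
  exacts [lt_min h₁ h₃, h₁, max_lt (lt_min h₁ h₃) (lt_min h₂ h₄), max_lt h₁ h₂]

end IntegerEdges

lemma ncard_frontier_smul_polar2_Qpoly_inter_latticePts {p c ℓ : ℤ} (hp : 1 ≤ p) (hc : 1 ≤ c)
    (h2 : 2 * ℓ = c * (p + 1)) {k : ℕ} (hk : k ∈ ({1, 2, 3} : Set ℕ)) :
    ((frontier ((ℓ : ℝ) • polar2 (Qpoly p k)) ∩ latticePts).ncard : ℤ) =
      (p + 4 - k) * ℓ + 2 * (ℓ + c) := by
  have hℓ : 0 < ℓ := by nlinarith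
  rw [smul_polar2_Qpoly p (Int.cast_pos.2 hℓ) hk,
    frontier_leftRegion (continuous_polarLower _ _ _) (continuous_polarUpper _ _),
    leftRegionBoundary_inter_latticePts (g := polarLower p ℓ k) (h := polarUpper ℓ k)
      (fun m => (Int.cast_polarLower p ℓ k m).symm) (fun m => (Int.cast_polarUpper ℓ k m).symm),
    ncard_image_of_injective _ (Int.cast_injective.prodMap Int.cast_injective),
    ncard_leftRegionBoundary_int (a := -c) (by omega)
      (fun m => polarUpper_lt_polarLower (by omega) h2)
      (polarLower_neg_eq_polarUpper (by omega) h2 hk)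
      (fun m => polarLower_lt_polarUpper hp (by omega) h2),
    polarUpper_sub_polarLower_self hℓ.le hk]
  ring

lemma two_mul_ellp_of_odd {p : ℤ} (hp : Odd p) : 2 * ellp p = 1 * (p + 1) := by
  rw [ellp, if_pos hp]
  have := Int.odd_iff.mp hp
  omega

lemma two_mul_ellp_of_even {p : ℤ} (hp : Even p) : 2 * ellp p = 2 * (p + 1) := by
  rw [ellp, if_neg (Int.not_odd_iff_even.mpr hp)]

/-- the number of lattice points on ∂(ℓ_p·Q̊_p^[k]). -/
theorem stmt11 (p : ℤ) (hp : 1 ≤ p) (k : ℕ) (hk : k ∈ ({1, 2, 3} : Set ℕ)) :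
    (Odd p →
      ((frontier ((ellp p : ℝ) • polar2 (Qpoly p k)) ∩ latticePts).ncard : ℚ) =
        (if k = 1 then ((p : ℚ) + 3) ^ 2
         else if k = 2 then (p : ℚ) ^ 2 + 5 * p + 8
         else (p : ℚ) ^ 2 + 4 * p + 7) / 2) ∧
    (Even p →
      ((frontier ((ellp p : ℝ) • polar2 (Qpoly p k)) ∩ latticePts).ncard : ℚ) =
        (if k = 1 then ((p : ℚ) + 3) ^ 2
         else if k = 2 then (p : ℚ) ^ 2 + 5 * p + 8
         else (p : ℚ) ^ 2 + 4 * p + 7)) := by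
  have count (c : ℤ) (hc : 1 ≤ c) (h2 : 2 * ellp p = c * (p + 1)) :
      ((frontier ((ellp p : ℝ) • polar2 (Qpoly p k)) ∩ latticePts).ncard : ℚ) =
        (p + 4 - k) * ellp p + 2 * (ellp p + c) := by
    exact_mod_cast ncard_frontier_smul_polar2_Qpoly_inter_latticePts hp hc h2 hk
  have hformula : (if k = 1 then ((p : ℚ) + 3) ^ 2
      else if k = 2 then (p : ℚ) ^ 2 + 5 * p + 8
      else (p : ℚ) ^ 2 + 4 * p + 7) = ((p : ℚ) + 6 - k) * (p + 1) + 4 := by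
    obtain rfl | rfl | rfl : k = 1 ∨ k = 2 ∨ k = 3 := by simpa using hk
    all_goals norm_num; ring
  rw [hformula]
  refine ⟨fun hodd => ?_, fun heven => ?_⟩
  · have h2q : (2 * ellp p : ℚ) = 1 * (p + 1) := by exact_mod_cast two_mul_ellp_of_odd hodd
    rw [count 1 le_rfl (two_mul_ellp_of_odd hodd)]
    linear_combination (p + 6 - k : ℚ) / 2 * h2q
  · have h2q : (2 * ellp p : ℚ) = 2 * (p + 1) := by exact_mod_cast two_mul_ellp_of_even heven
    rw [count 2 one_le_two (two_mul_ellp_of_even heven)]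
    linear_combination (p + 6 - k : ℚ) / 2 * h2q
end
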